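/- arXiv:1410.3990 — 12 statements merged into one kernel-verified Lean document; each statement's English description precedes it below -/
import Mathlib

section
/- Let C be a (strict) 2-category and W a class of 1-morphisms satisfying axioms (BF1)–(BF5). If w : B → A belongs to W, f¹, f² : C → B are 1-morphisms and γ, γ' : f¹ ⇒ f² are 2-morphisms such that w ◁ γ = w ◁ γ' (whiskering on the left by w), then there exist an object E and a 1-morphism u : E → C belonging to W such that γ ▷ u = γ' ▷ u (whiskering on the right by u). -/
open CategoryTheory CategoryTheory.Bicategory

universe w v u


/-- Pronk's axioms (BF1)–(BF5) for a right bicalculus of fractions on a class `W`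
of 1-morphisms of a bicategory. -/
structure PronkBF {B : Type u} [Bicategory.{w, v} B]
    (W : ∀ ⦃X Y : B⦄, (X ⟶ Y) → Prop) : Prop where
  bf1 : ∀ X : B, W (𝟙 X)
  bf2 : ∀ {X Y Z : B} (f : X ⟶ Y) (g : Y ⟶ Z), W f → W g → W (f ≫ g)
  bf3 : ∀ {X Y Z : B} (wm : X ⟶ Y) (f : Z ⟶ Y), W wm →
      ∃ (D : B) (w' : D ⟶ Z) (f' : D ⟶ X), W w' ∧ Nonempty (w' ≫ f ≅ f' ≫ wm)
  bf4a : ∀ {X Y Z : B} (wm : Y ⟶ X) (f₁ f₂ : Z ⟶ Y) (α : f₁ ≫ wm ⟶ f₂ ≫ wm), W wm →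
      ∃ (D : B) (vm : D ⟶ Z) (β : vm ≫ f₁ ⟶ vm ≫ f₂), W vm ∧
        vm ◁ α = (α_ vm f₁ wm).inv ≫ β ▷ wm ≫ (α_ vm f₂ wm).hom
  bf4b : ∀ {X Y Z : B} (wm : Y ⟶ X) (f₁ f₂ : Z ⟶ Y) (α : f₁ ≫ wm ⟶ f₂ ≫ wm), W wm → IsIso α →
      ∃ (D : B) (vm : D ⟶ Z) (β : vm ≫ f₁ ⟶ vm ≫ f₂), W vm ∧ IsIso β ∧
        vm ◁ α = (α_ vm f₁ wm).inv ≫ β ▷ wm ≫ (α_ vm f₂ wm).hom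
  bf4c : ∀ {X Y Z : B} (wm : Y ⟶ X) (f₁ f₂ : Z ⟶ Y) (α : f₁ ≫ wm ⟶ f₂ ≫ wm)
      {D D' : B} (vm : D ⟶ Z) (β : vm ≫ f₁ ⟶ vm ≫ f₂)
      (vm' : D' ⟶ Z) (β' : vm' ≫ f₁ ⟶ vm' ≫ f₂),
      W wm → W vm → W vm' →
      (vm ◁ α = (α_ vm f₁ wm).inv ≫ β ▷ wm ≫ (α_ vm f₂ wm).hom) →
      (vm' ◁ α = (α_ vm' f₁ wm).inv ≫ β' ▷ wm ≫ (α_ vm' f₂ wm).hom) →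
      ∃ (E : B) (um : E ⟶ D) (um' : E ⟶ D') (ζ : um ≫ vm ≅ um' ≫ vm'),
        W (um ≫ vm) ∧
        ζ.hom ▷ f₁ ≫ (α_ um' vm' f₁).hom ≫ um' ◁ β' ≫ (α_ um' vm' f₂).inv
          = (α_ um vm f₁).hom ≫ um ◁ β ≫ (α_ um vm f₂).inv ≫ ζ.hom ▷ f₂
  bf5 : ∀ {X Y : B} (vm wm : X ⟶ Y), W wm → Nonempty (vm ≅ wm) → W vm
/-- Lemma 2.1 / lem-03: if `W` satisfies (BF1)–(BF5), `w ∈ W`, and two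
2-cells `γ, γ' : f₁ ⟶ f₂` become equal after whiskering with `w` on the target side, then
they become equal after whiskering with some `u ∈ W` on the source side. -/
theorem statement0 {B : Type u} [Bicategory.{w, v} B] [Bicategory.Strict B]
    (W : ∀ ⦃X Y : B⦄, (X ⟶ Y) → Prop) (hBF : PronkBF W)
    {A Bb C : B} (wm : Bb ⟶ A) (hw : W wm) (f₁ f₂ : C ⟶ Bb)
    (γ γ' : f₁ ⟶ f₂) (h : γ ▷ wm = γ' ▷ wm) :
    ∃ (E : B) (u : E ⟶ C), W u ∧ u ◁ γ = u ◁ γ' := by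
  have eq1 : (𝟙 C) ◁ (γ ▷ wm) =
      (α_ (𝟙 C) f₁ wm).inv ≫ ((𝟙 C) ◁ γ) ▷ wm ≫ (α_ (𝟙 C) f₂ wm).hom := by
    simp [whisker_assoc]
  have eq2 : (𝟙 C) ◁ (γ ▷ wm) =
      (α_ (𝟙 C) f₁ wm).inv ≫ ((𝟙 C) ◁ γ') ▷ wm ≫ (α_ (𝟙 C) f₂ wm).hom := by
    rw [h]; simp [whisker_assoc]
  obtain ⟨E, um, um', ζ, hWu, hζ⟩ :=
    hBF.bf4c wm f₁ f₂ (γ ▷ wm) (𝟙 C) ((𝟙 C) ◁ γ) (𝟙 C) ((𝟙 C) ◁ γ')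
      hw (hBF.bf1 C) (hBF.bf1 C) eq1 eq2
  refine ⟨E, um ≫ 𝟙 C, hWu, ?_⟩
  have hexch : ζ.hom ▷ f₁ ≫ (um' ≫ 𝟙 C) ◁ γ' = (um ≫ 𝟙 C) ◁ γ' ≫ ζ.hom ▷ f₂ :=
    (whisker_exchange _ _).symm
  have hζ' : ζ.hom ▷ f₁ ≫ (um' ≫ 𝟙 C) ◁ γ' = (um ≫ 𝟙 C) ◁ γ ≫ ζ.hom ▷ f₂ := by
    have := hζ
    simpa [Bicategory.whiskerLeft_comp, comp_whiskerLeft] using this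
  have : (um ≫ 𝟙 C) ◁ γ ≫ ζ.hom ▷ f₂ = (um ≫ 𝟙 C) ◁ γ' ≫ ζ.hom ▷ f₂ := by
    rw [← hζ', hexch]
  exact (cancel_mono (ζ.hom ▷ f₂)).mp this
end

section
/- Let C be a 2-category and W a class of 1-morphisms satisfying (BF1)–(BF5). Given objects A, B, B', C and 1-morphisms w : A → B, z : B → B', f : C → B such that both z and z ∘ w belong to W, there exist an object D, a 1-morphism w' : D → C in W, a 1-morphism f' : D → A and an invertible 2-morphism α : f ∘ w' ⇒ w ∘ f'. (That is, axiom (BF3) holds already when w is only assumed to become W after postcomposition with some z ∈ W.) -/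
open CategoryTheory CategoryTheory.Bicategory

universe w v u


/-- Lemma lem-05: (BF3) holds already when `w` is only assumed to be in `W`
after postcomposition with some `z ∈ W`. -/
theorem statement1 {B : Type u} [Bicategory.{w, v} B] [Bicategory.Strict B]
    (W : ∀ ⦃X Y : B⦄, (X ⟶ Y) → Prop) (hBF : PronkBF W)
    {A Bb B' C : B} (wm : A ⟶ Bb) (z : Bb ⟶ B') (f : C ⟶ Bb)
    (hz : W z) (hzw : W (wm ≫ z)) :
    ∃ (D : B) (w' : D ⟶ C) (f' : D ⟶ A), W w' ∧ Nonempty (w' ≫ f ≅ f' ≫ wm) := by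
  obtain ⟨D, w', f', hw', ⟨α⟩⟩ := hBF.bf3 (wm ≫ z) (f ≫ z) hzw
  have hα : IsIso ((α_ w' f z).hom ≫ α.hom ≫ (α_ f' wm z).inv) := inferInstance
  obtain ⟨E, v, β, hv, hβ, _⟩ :=
    hBF.bf4b z (w' ≫ f) (f' ≫ wm) ((α_ w' f z).hom ≫ α.hom ≫ (α_ f' wm z).inv) hz hα
  exact ⟨E, v ≫ w', v ≫ f', hBF.bf2 v w' hv hw',
    ⟨(α_ v w' f) ≪≫ @asIso _ _ _ _ β hβ ≪≫ (α_ v f' wm).symm⟩⟩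
end

section
/- Let C be a 2-category and W a class of 1-morphisms satisfying (BF1)–(BF5). Given objects A, A', B, C, 1-morphisms w : B → A, z : A → A', f¹, f² : C → B with both z and z ∘ w in W, and any 2-morphism α : w ∘ f¹ ⇒ w ∘ f², there exist an object D, a 1-morphism v : D → C in W and a 2-morphism β : f¹ ∘ v ⇒ f² ∘ v such that α ▷ v = w ◁ β. Moreover, if α is invertible, then β can be chosen invertible. (That is, axioms (BF4a) and (BF4b) hold when w is only assumed to be in W after postcomposition with some z ∈ W.) -/
open CategoryTheory CategoryTheory.Bicategory

universe w v u


section Helpers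

variable {B : Type u} [Bicategory.{w, v} B] [Bicategory.Strict B]

theorem heq_conj {a b : B} {f g f' g' : a ⟶ b} (e1 : f' = f) (e2 : g = g') (η : f ⟶ g) :
    HEq (eqToHom e1 ≫ η ≫ eqToHom e2) η :=
  (conj_eqToHom_iff_heq' _ _ e1 e2).mp rfl

theorem heq_WA {a b c d : B} (f : a ⟶ b) {g g' : b ⟶ c} (η : g ⟶ g') (h : c ⟶ d) :
    HEq ((f ◁ η) ▷ h) (f ◁ (η ▷ h)) := by
  rw [whisker_assoc]
  simp only [Bicategory.Strict.associator_eqToIso, eqToIso.hom, eqToIso.inv]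
  exact heq_conj _ _ _

theorem heq_WRC {a b c d : B} {f f' : a ⟶ b} (η : f ⟶ f') (g : b ⟶ c) (h : c ⟶ d) :
    HEq (η ▷ (g ≫ h)) ((η ▷ g) ▷ h) := by
  rw [Bicategory.whiskerRight_comp]
  simp only [Bicategory.Strict.associator_eqToIso, eqToIso.hom, eqToIso.inv]
  exact heq_conj _ _ _

theorem heq_CWL {a b c d : B} (f : a ⟶ b) (g : b ⟶ c) {h h' : c ⟶ d} (η : h ⟶ h') :
    HEq ((f ≫ g) ◁ η) (f ◁ (g ◁ η)) := by
  rw [comp_whiskerLeft]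
  simp only [Bicategory.Strict.associator_eqToIso, eqToIso.hom, eqToIso.inv]
  exact heq_conj _ _ _

theorem heq_IWL {a b : B} {f g : a ⟶ b} (η : f ⟶ g) : HEq ((𝟙 a) ◁ η) η := by
  rw [Bicategory.id_whiskerLeft]
  simp only [Bicategory.Strict.leftUnitor_eqToIso, eqToIso.hom, eqToIso.inv]
  exact heq_conj _ _ _

theorem heqWL {a b c : B} (f : a ⟶ b) {g g' h h' : b ⟶ c} (eg : g = g') (eh : h = h')
    {η : g ⟶ h} {η' : g' ⟶ h'} (e : HEq η η') : HEq (f ◁ η) (f ◁ η') := by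
  subst eg; subst eh; rw [eq_of_heq e]

theorem heqWR {a b c : B} {f f' g g' : a ⟶ b} (h : b ⟶ c) (ef : f = f') (eg : g = g')
    {η : f ⟶ g} {η' : f' ⟶ g'} (e : HEq η η') : HEq (η ▷ h) (η' ▷ h) := by
  subst ef; subst eg; rw [eq_of_heq e]

theorem heqComp {a b : B} {f g h f' g' h' : a ⟶ b} (ef : f = f') (eg : g = g') (eh : h = h')
    {η : f ⟶ g} {θ : g ⟶ h} {η' : f' ⟶ g'} {θ' : g' ⟶ h'}
    (e1 : HEq η η') (e2 : HEq θ θ') : HEq (η ≫ θ) (η' ≫ θ') := by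
  subst ef; subst eg; subst eh; rw [eq_of_heq e1, eq_of_heq e2]

theorem heq_eqToHom_comp {a b : B} {f f' g : a ⟶ b} (e : f' = f) (η : f ⟶ g) :
    HEq (eqToHom e ≫ η) η := by subst e; simp

theorem heq_comp_eqToHom {a b : B} {f g g' : a ⟶ b} (e : g = g') (η : f ⟶ g) :
    HEq (η ≫ eqToHom e) η := by subst e; simp

theorem heqInv {a b : B} {f g f' g' : a ⟶ b} (ef : f = f') (eg : g = g')
    {η : f ⟶ g} {η' : f' ⟶ g'} [IsIso η] [IsIso η'] (e : HEq η η') : HEq (inv η) (inv η') := by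
  subst ef; subst eg; obtain rfl := eq_of_heq e; rfl

end Helpers

/-- Lemma lem-06: (BF4a) and (BF4b) hold already when `w` is only assumed
to be in `W` after postcomposition with some `z ∈ W`. -/
theorem statement2 {B : Type u} [Bicategory.{w, v} B] [Bicategory.Strict B]
    (W : ∀ ⦃X Y : B⦄, (X ⟶ Y) → Prop) (hBF : PronkBF W)
    {A A' Bb C : B} (wm : Bb ⟶ A) (z : A ⟶ A') (f₁ f₂ : C ⟶ Bb)
    (hz : W z) (hzw : W (wm ≫ z)) (α : f₁ ≫ wm ⟶ f₂ ≫ wm) :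
    ∃ (D : B) (vm : D ⟶ C) (β : vm ≫ f₁ ⟶ vm ≫ f₂), W vm ∧
      (vm ◁ α = (α_ vm f₁ wm).inv ≫ β ▷ wm ≫ (α_ vm f₂ wm).hom) ∧
      (IsIso α → IsIso β) := by
  classical
  have h1 : f₁ ≫ (wm ≫ z) = (f₁ ≫ wm) ≫ z := (Bicategory.Strict.assoc f₁ wm z).symm
  have h2 : (f₂ ≫ wm) ≫ z = f₂ ≫ (wm ≫ z) := Bicategory.Strict.assoc f₂ wm z
  set α' : f₁ ≫ (wm ≫ z) ⟶ f₂ ≫ (wm ≫ z) := eqToHom h1 ≫ α ▷ z ≫ eqToHom h2 with hα'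
  have key : ∀ {D : B} (v : D ⟶ C) (β : v ≫ f₁ ⟶ v ≫ f₂), W v →
      (v ◁ α' = (α_ v f₁ (wm ≫ z)).inv ≫ β ▷ (wm ≫ z) ≫ (α_ v f₂ (wm ≫ z)).hom) →
      ∃ (D' : B) (V : D' ⟶ C) (βf : V ≫ f₁ ⟶ V ≫ f₂), W V ∧
        (V ◁ α = (α_ V f₁ wm).inv ≫ βf ▷ wm ≫ (α_ V f₂ wm).hom) ∧ (IsIso β → IsIso βf) := by
    intro D v β hv eq1
    have e₁ : (v ≫ f₁) ≫ wm = v ≫ (f₁ ≫ wm) := Bicategory.Strict.assoc v f₁ wm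
    have e₂ : v ≫ (f₂ ≫ wm) = (v ≫ f₂) ≫ wm := (Bicategory.Strict.assoc v f₂ wm).symm
    set g₁ : D ⟶ A := (v ≫ f₁) ≫ wm with hg₁
    set g₂ : D ⟶ A := (v ≫ f₂) ≫ wm with hg₂
    set γ : g₁ ⟶ g₂ := eqToHom e₁ ≫ (v ◁ α) ≫ eqToHom e₂ with hγ
    simp only [Bicategory.Strict.associator_eqToIso, eqToIso.hom, eqToIso.inv] at eq1
    have hA : HEq (v ◁ α') (β ▷ (wm ≫ z)) := by rw [eq1]; exact heq_conj _ _ _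
    -- Step A : γ ▷ z = (β ▷ wm) ▷ z
    have hstep : γ ▷ z = (β ▷ wm) ▷ z := by
      refine eq_of_heq (HEq.trans (heqWR z e₁ e₂.symm (heq_conj e₁ e₂ _)) ?_)
      refine HEq.trans (heq_WA v α z) ?_
      refine HEq.trans (heqWL v h1.symm h2 (heq_conj h1 h2 (α ▷ z)).symm) ?_
      exact hA.trans (heq_WRC β wm z)
    -- Step B : cancellation of z via (BF4c)
    have i₁ : 𝟙 D ≫ g₁ = g₁ := Bicategory.Strict.id_comp g₁
    have i₂ : g₂ = 𝟙 D ≫ g₂ := (Bicategory.Strict.id_comp g₂).symm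
    set β₁ : 𝟙 D ≫ g₁ ⟶ 𝟙 D ≫ g₂ := eqToHom i₁ ≫ γ ≫ eqToHom i₂ with hβ₁
    set β₂ : 𝟙 D ≫ g₁ ⟶ 𝟙 D ≫ g₂ := eqToHom i₁ ≫ (β ▷ wm) ≫ eqToHom i₂ with hβ₂
    have hyp1 : 𝟙 D ◁ (γ ▷ z) =
        (α_ (𝟙 D) g₁ z).inv ≫ β₁ ▷ z ≫ (α_ (𝟙 D) g₂ z).hom := by
      simp only [Bicategory.Strict.associator_eqToIso, eqToIso.hom, eqToIso.inv]
      refine (conj_eqToHom_iff_heq' _ _ _ _).mpr ?_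
      exact (heq_IWL (γ ▷ z)).trans (heqWR z i₁ i₂.symm (heq_conj i₁ i₂ γ)).symm
    have hyp2 : 𝟙 D ◁ (γ ▷ z) =
        (α_ (𝟙 D) g₁ z).inv ≫ β₂ ▷ z ≫ (α_ (𝟙 D) g₂ z).hom := by
      simp only [Bicategory.Strict.associator_eqToIso, eqToIso.hom, eqToIso.inv]
      refine (conj_eqToHom_iff_heq' _ _ _ _).mpr ?_
      refine ((heq_IWL (γ ▷ z)).trans (heq_of_eq hstep)).trans ?_
      exact (heqWR z i₁ i₂.symm (heq_conj i₁ i₂ (β ▷ wm))).symm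
    obtain ⟨E, u, u', ζ, hWu1, eq3⟩ :=
      hBF.bf4c z g₁ g₂ (γ ▷ z) (𝟙 D) β₁ (𝟙 D) β₂ hz (hBF.bf1 D) (hBF.bf1 D) hyp1 hyp2
    have cu : u ≫ 𝟙 D = u := Bicategory.Strict.comp_id u
    have cu' : u' ≫ 𝟙 D = u' := Bicategory.Strict.comp_id u'
    have hu : W u := cu ▸ hWu1
    set ζh : u ⟶ u' := eqToHom cu.symm ≫ ζ.hom ≫ eqToHom cu' with hζh
    set ζi : u' ⟶ u := eqToHom cu'.symm ≫ ζ.inv ≫ eqToHom cu with hζi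
    have hζhom : HEq ζh ζ.hom := heq_conj _ _ _
    have hζinv : HEq ζi ζ.inv := heq_conj _ _ _
    simp only [Bicategory.Strict.associator_eqToIso, eqToIso.hom, eqToIso.inv,
      Category.assoc] at eq3
    -- the equation `hY`
    have p : (u' ≫ 𝟙 D) ≫ g₁ = u' ≫ (𝟙 D ≫ g₁) := Bicategory.Strict.assoc _ _ _
    have q : u' ≫ (𝟙 D ≫ g₂) = (u' ≫ 𝟙 D) ≫ g₂ := (Bicategory.Strict.assoc _ _ _).symm
    have r : (u ≫ 𝟙 D) ≫ g₁ = u ≫ (𝟙 D ≫ g₁) := Bicategory.Strict.assoc _ _ _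
    have s : u ≫ (𝟙 D ≫ g₂) = (u ≫ 𝟙 D) ≫ g₂ := (Bicategory.Strict.assoc _ _ _).symm
    have hY : ζ.hom ▷ g₁ ≫ eqToHom p ≫ u' ◁ β₂ ≫ eqToHom q ≫ ζ.inv ▷ g₂
        = eqToHom r ≫ u ◁ β₁ ≫ eqToHom s := by
      rw [← cancel_mono (ζ.hom ▷ g₂)]
      simp only [Category.assoc, inv_hom_whiskerRight, Category.comp_id]
      exact eq3
    have hXY : HEq (ζ.hom ▷ g₁ ≫ eqToHom p ≫ u' ◁ β₂ ≫ eqToHom q ≫ ζ.inv ▷ g₂)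
        (u ◁ β₁) := by rw [hY]; exact heq_conj _ _ _
    -- final data
    have a1 : (u ≫ v) ≫ f₁ = u ≫ (v ≫ f₁) := Bicategory.Strict.assoc u v f₁
    have a2 : u ≫ (v ≫ f₂) = (u ≫ v) ≫ f₂ := (Bicategory.Strict.assoc u v f₂).symm
    refine ⟨E, u ≫ v,
      eqToHom a1 ≫ ζh ▷ (v ≫ f₁) ≫ u' ◁ β ≫ ζi ▷ (v ≫ f₂) ≫ eqToHom a2,
      hBF.bf2 u v hu hv, ?_, ?_⟩
    · simp only [Bicategory.Strict.associator_eqToIso, eqToIso.hom, eqToIso.inv]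
      refine (conj_eqToHom_iff_heq' _ _ _ _).mpr ?_
      -- chain1 : HEq ((u ≫ v) ◁ α) (u ◁ β₁)
      have chain1 : HEq ((u ≫ v) ◁ α) (u ◁ β₁) := by
        refine (heq_CWL u v α).trans ?_
        refine HEq.trans (heqWL u e₁.symm e₂ (heq_conj e₁ e₂ _).symm) ?_
        exact heqWL u i₁.symm i₂ (heq_conj i₁ i₂ γ).symm
      refine (chain1.trans hXY.symm).trans ?_
      -- it remains : HEq (ζ.hom ▷ g₁ ≫ eqToHom p ≫ u' ◁ β₂ ≫ eqToHom q ≫ ζ.inv ▷ g₂)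
      --   ((eqToHom a1 ≫ ζh ▷ (v ≫ f₁) ≫ u' ◁ β ≫ ζi ▷ (v ≫ f₂) ≫ eqToHom a2) ▷ wm)
      have hbf : (eqToHom a1 ≫ ζh ▷ (v ≫ f₁) ≫ u' ◁ β ≫ ζi ▷ (v ≫ f₂) ≫ eqToHom a2) ▷ wm
          = eqToHom (congrArg (· ≫ wm) a1) ≫ (ζh ▷ (v ≫ f₁)) ▷ wm ≫ (u' ◁ β) ▷ wm ≫
            (ζi ▷ (v ≫ f₂)) ▷ wm ≫ eqToHom (congrArg (· ≫ wm) a2) := by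
        simp only [comp_whiskerRight, eqToHom_whiskerRight, Category.assoc]
      rw [hbf]
      -- strip and compare piecewise
      have hP1 : HEq ((ζh ▷ (v ≫ f₁)) ▷ wm) (ζ.hom ▷ g₁) :=
        (heq_WRC ζh (v ≫ f₁) wm).symm.trans (heqWR g₁ cu.symm cu'.symm hζhom)
      have hP2 : HEq ((u' ◁ β) ▷ wm) (u' ◁ β₂) :=
        (heq_WA u' β wm).trans (heqWL u' i₁.symm i₂ (heq_conj i₁ i₂ (β ▷ wm)).symm)
      have hP3 : HEq ((ζi ▷ (v ≫ f₂)) ▷ wm) (ζ.inv ▷ g₂) :=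
        (heq_WRC ζi (v ≫ f₂) wm).symm.trans (heqWR g₂ cu'.symm cu.symm hζinv)
      have eend1 : (u ≫ (v ≫ f₁)) ≫ wm = (u ≫ 𝟙 D) ≫ g₁ := by
        simp only [hg₁, Bicategory.Strict.assoc, Bicategory.Strict.comp_id]
      have eend2 : (u' ≫ (v ≫ f₁)) ≫ wm = (u' ≫ 𝟙 D) ≫ g₁ := by
        simp only [hg₁, Bicategory.Strict.assoc, Bicategory.Strict.comp_id]
      have eend3 : (u' ≫ (v ≫ f₂)) ≫ wm = u' ≫ (𝟙 D ≫ g₂) := by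
        simp only [hg₂, Bicategory.Strict.assoc, Bicategory.Strict.id_comp]
      have eend4 : (u ≫ (v ≫ f₂)) ≫ wm = (u ≫ 𝟙 D) ≫ g₂ := by
        simp only [hg₂, Bicategory.Strict.assoc, Bicategory.Strict.comp_id]
      have eend0 : ((u ≫ v) ≫ f₂) ≫ wm = (u ≫ 𝟙 D) ≫ g₂ := by
        simp only [hg₂, Bicategory.Strict.assoc, Bicategory.Strict.comp_id]
      refine HEq.symm ?_
      -- goal : HEq (eqToHom _ ≫ P1 ≫ P2 ≫ P3 ≫ eqToHom _) (Q1 ≫ eqToHom p ≫ Q2 ≫ eqToHom q ≫ Q3)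
      refine (heq_eqToHom_comp _ _).trans ?_
      refine heqComp eend1 eend2 eend0 hP1 ?_
      refine HEq.trans ?_ (heq_eqToHom_comp p _).symm
      refine heqComp (eend2.trans p) eend3 eend0 hP2 ?_
      refine ((heq_comp_eqToHom _ _).trans hP3).trans (heq_eqToHom_comp q _).symm
    · intro hβ
      have : IsIso ζh := by rw [hζh]; infer_instance
      have : IsIso ζi := by rw [hζi]; infer_instance
      infer_instance
  by_cases hIso : IsIso α
  · have hIso' : IsIso α' := by rw [hα']; infer_instance
    obtain ⟨D, v, β, hv, hβi, eq1⟩ := hBF.bf4b (wm ≫ z) f₁ f₂ α' hzw hIso'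
    obtain ⟨D', V, βf, hV, heqn, himp⟩ := key v β hv eq1
    exact ⟨D', V, βf, hV, heqn, fun _ => himp hβi⟩
  · obtain ⟨D, v, β, hv, eq1⟩ := hBF.bf4a (wm ≫ z) f₁ f₂ α' hzw
    obtain ⟨D', V, βf, hV, heqn, himp⟩ := key v β hv eq1
    exact ⟨D', V, βf, hV, heqn, fun h => absurd h hIso⟩
end

section
/- Let C be a 2-category and W a class of 1-morphisms satisfying (BF1)–(BF5). Given objects A, B, C and 1-morphisms w : C → B and z : B → A such that both z and z ∘ w belong to W, there exist an object D and a 1-morphism v : D → C such that w ∘ v belongs to W. -/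
open CategoryTheory CategoryTheory.Bicategory

universe w v u


/-- Lemma lem-11: if `z` and `z ∘ w` belong to `W` then `w` becomes a member
of `W` after precomposition with a suitable `v`. -/
theorem statement3 {B : Type u} [Bicategory.{w, v} B] [Bicategory.Strict B]
    (W : ∀ ⦃X Y : B⦄, (X ⟶ Y) → Prop) (hBF : PronkBF W)
    {A Bb C : B} (wm : C ⟶ Bb) (z : Bb ⟶ A) (hz : W z) (hzw : W (wm ≫ z)) :
    ∃ (D : B) (vm : D ⟶ C), W (vm ≫ wm) := by
  obtain ⟨D, u, f', hu, ⟨e⟩⟩ := hBF.bf3 (wm ≫ z) z hzw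
  -- e : u ≫ z ≅ f' ≫ wm ≫ z
  have ha : f' ≫ wm ≫ z = (f' ≫ wm) ≫ z := (Bicategory.Strict.assoc f' wm z).symm
  let e' : u ≫ z ≅ (f' ≫ wm) ≫ z := e ≪≫ eqToIso ha
  obtain ⟨E, vm, β, hvm, hβ, -⟩ := hBF.bf4b z u (f' ≫ wm) e'.hom hz inferInstance
  refine ⟨E, vm ≫ f', ?_⟩
  rw [Bicategory.Strict.assoc]
  exact hBF.bf5 _ (vm ≫ u) (hBF.bf2 vm u hvm hu) ⟨(asIso β).symm⟩
end

section
/- Let C be a 2-category and W a class of 1-morphisms satisfying (BF1)–(BF5). Fix 1-morphisms w¹ : A¹ → A, w² : A² → A, z : A → A' with z, z ∘ w¹, z ∘ w² ∈ W. Suppose given two diagrams: (p : E → A¹, q : E → A², ς : z ∘ w¹ ∘ p ⇒ z ∘ w² ∘ q invertible) and (r : F → A¹, s : F → A², η : z ∘ w¹ ∘ r ⇒ z ∘ w² ∘ s invertible), with z ∘ w¹ ∘ p and z ∘ w¹ ∘ r in W. Then there exist objects G and A³, morphisms t¹ : G → E with p ∘ t¹ ∈ W, t² : G → F, t³ : A³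 → G in W, and invertible 2-morphisms ε : p ∘ t¹ ⇒ r ∘ t² and κ : s ∘ t² ∘ t³ ⇒ q ∘ t¹ ∘ t³, such that ς ▷ (t¹ ∘ t³) equals the pasting of κ, ε and η, namely the composite (w² ◁ κ whiskered appropriately) ∘ (η ▷ (t² ∘ t³)) ∘ (w¹ ◁ ε ▷ t³) from w¹ ∘ p ∘ t¹ ∘ t³ to w² ∘ q ∘ t¹ ∘ t³ (all composed with z). -/
open CategoryTheory CategoryTheory.Bicategory

universe w v u


/-! Since `z ∘ w¹ ∈ W` and `z ∘ w¹ ∘ p ∈ W`, (BF3) and (BF4b) produce a refinement `a` of `E` with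
`p ∘ a ∈ W`. Completing the cospan `(z ∘ w¹ ∘ p ∘ a, z ∘ w¹ ∘ r)` by (BF3) and dividing the
resulting 2-cell by `z ∘ w¹` via (BF4b) yields `t¹, t²` and `ε`. Finally the invertible 2-cell
`η⁻¹ ∘ ε⁻¹ ∘ ς` from `z w² s t²` to `z w² q t¹` is divided by `z ∘ w²`, which gives `t³` and `κ`;
the pasting identity is then a rearrangement of the defining equation of `κ`. -/

namespace PronkBF

variable {B : Type u} [Bicategory.{w, v} B] {W : ∀ ⦃X Y : B⦄, (X ⟶ Y) → Prop}

theorem of_iso (hBF : PronkBF W) {X Y : B} {f g : X ⟶ Y} (e : f ≅ g) (hg : W g) : W f :=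
  hBF.bf5 f g hg ⟨e⟩

theorem bf4b_iso (hBF : PronkBF W) {X Y Z : B} (wm : Y ⟶ X) (f₁ f₂ : Z ⟶ Y)
    (α : f₁ ≫ wm ≅ f₂ ≫ wm) (hwm : W wm) :
    ∃ (D : B) (vm : D ⟶ Z) (β : vm ≫ f₁ ≅ vm ≫ f₂), W vm ∧
      vm ◁ α.hom = (α_ vm f₁ wm).inv ≫ β.hom ▷ wm ≫ (α_ vm f₂ wm).hom := by
  obtain ⟨D, vm, β, hvm, hβ, hα⟩ := hBF.bf4b wm f₁ f₂ α.hom hwm inferInstance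
  exact ⟨D, vm, asIso β, hvm, hα⟩

theorem exists_iso_of_iso_whiskerRight (hBF : PronkBF W) {X Y Z : B} (wm : Y ⟶ X)
    (f₁ f₂ : Z ⟶ Y) (α : f₁ ≫ wm ≅ f₂ ≫ wm) (hwm : W wm) :
    ∃ (D : B) (vm : D ⟶ Z), W vm ∧ Nonempty (vm ≫ f₁ ≅ vm ≫ f₂) := by
  obtain ⟨D, vm, β, hvm, -⟩ := hBF.bf4b_iso wm f₁ f₂ α hwm
  exact ⟨D, vm, hvm, ⟨β⟩⟩

theorem exists_comp_mem_of_comp_mem (hBF : PronkBF W) {X Y Z : B} {f : X ⟶ Y} {g : Y ⟶ Z}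
    (hg : W g) (hfg : W (f ≫ g)) : ∃ (D : B) (a : D ⟶ X), W (a ≫ f) := by
  obtain ⟨D₀, a₀, a₁, ha₀, ⟨ι⟩⟩ := hBF.bf3 (f ≫ g) g hfg
  obtain ⟨D, vm, hvm, ⟨β⟩⟩ :=
    hBF.exists_iso_of_iso_whiskerRight g a₀ (a₁ ≫ f) (ι ≪≫ (α_ a₁ f g).symm) hg
  have : W (vm ≫ a₁ ≫ f) := hBF.of_iso β.symm (hBF.bf2 _ _ hvm ha₀)
  exact ⟨D, vm ≫ a₁, hBF.of_iso (α_ vm a₁ f) this⟩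

theorem exists_span_iso_of_comp_mem (hBF : PronkBF W) {X₁ X₂ Y Z : B} (f₁ : X₁ ⟶ Y)
    {f₂ : X₂ ⟶ Y} {g : Y ⟶ Z} (hg : W g) (hf₂g : W (f₂ ≫ g)) :
    ∃ (G : B) (t₁ : G ⟶ X₁) (t₂ : G ⟶ X₂), W t₁ ∧ Nonempty (t₁ ≫ f₁ ≅ t₂ ≫ f₂) := by
  obtain ⟨D, b, c, hb, ⟨ι⟩⟩ := hBF.bf3 (f₂ ≫ g) (f₁ ≫ g) hf₂g
  obtain ⟨G, vm, hvm, ⟨β⟩⟩ := hBF.exists_iso_of_iso_whiskerRight g (b ≫ f₁) (c ≫ f₂)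
    (α_ b f₁ g ≪≫ ι ≪≫ (α_ c f₂ g).symm) hg
  exact ⟨G, vm ≫ b, vm ≫ c, hBF.bf2 _ _ hvm hb, ⟨α_ vm b f₁ ≪≫ β ≪≫ (α_ vm c f₂).symm⟩⟩

theorem exists_whiskerLeft_eq_pasting [Bicategory.Strict B] (hBF : PronkBF W)
    {A A' A₁ A₂ E F G : B} (w₁ : A₁ ⟶ A) (w₂ : A₂ ⟶ A) (z : A ⟶ A') (hzw₂ : W (w₂ ≫ z))
    {p : E ⟶ A₁} {q : E ⟶ A₂} {r : F ⟶ A₁} {s : F ⟶ A₂}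
    (ς : (p ≫ w₁) ≫ z ≅ (q ≫ w₂) ≫ z) (η : (r ≫ w₁) ≫ z ≅ (s ≫ w₂) ≫ z)
    {t₁ : G ⟶ E} {t₂ : G ⟶ F} (ε' : t₁ ≫ p ≅ t₂ ≫ r) :
    ∃ (A₃ : B) (t₃ : A₃ ⟶ G) (κ : t₃ ≫ t₂ ≫ s ≅ t₃ ≫ t₁ ≫ q), W t₃ ∧
      (t₃ ≫ t₁) ◁ ς.hom =
        eqToHom (by simp) ≫ (t₃ ◁ ε'.hom) ▷ (w₁ ≫ z) ≫ eqToHom (by simp) ≫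
          (t₃ ≫ t₂) ◁ η.hom ≫ eqToHom (by simp) ≫ κ.hom ▷ (w₂ ≫ z) ≫
          eqToHom (by simp) := by
  let γ : (t₂ ≫ s) ≫ w₂ ≫ z ≅ (t₁ ≫ q) ≫ w₂ ≫ z :=
    eqToIso (by simp) ≪≫ whiskerLeftIso t₂ η.symm ≪≫ eqToIso (by simp) ≪≫
      whiskerRightIso ε'.symm (w₁ ≫ z) ≪≫ eqToIso (by simp) ≪≫ whiskerLeftIso t₁ ς ≪≫
      eqToIso (by simp)
  obtain ⟨A₃, t₃, κ, ht₃, hκ⟩ := hBF.bf4b_iso (w₂ ≫ z) _ _ γ hzw₂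
  have hκ' : κ.hom ▷ (w₂ ≫ z) = (α_ t₃ _ _).hom ≫ t₃ ◁ γ.hom ≫ (α_ t₃ _ _).inv := by
    simp [hκ]
  refine ⟨A₃, t₃, κ, ht₃, ?_⟩
  rw [hκ']
  simp [γ, Bicategory.Strict.associator_eqToIso, Bicategory.whisker_assoc]

end PronkBF

/-- Lemma lem-04: any two invertible fillers `(E, p, q, ς)` and
`(F, r, s, η)` for the cospan `(z ∘ w¹, z ∘ w²)` admit a common refinement `(G, A³, t¹, t², t³)`
with invertible comparison 2-cells `ε` and `κ`, compatible with `ς` and `η`. -/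
theorem statement5 {B : Type u} [Bicategory.{w, v} B] [Bicategory.Strict B]
    (W : ∀ ⦃X Y : B⦄, (X ⟶ Y) → Prop) (hBF : PronkBF W)
    {A A' A₁ A₂ E F : B}
    (w₁ : A₁ ⟶ A) (w₂ : A₂ ⟶ A) (z : A ⟶ A')
    (hzw₁ : W (w₁ ≫ z)) (hzw₂ : W (w₂ ≫ z))
    (p : E ⟶ A₁) (q : E ⟶ A₂) (r : F ⟶ A₁) (s : F ⟶ A₂)
    (hp : W ((p ≫ w₁) ≫ z)) (hr : W ((r ≫ w₁) ≫ z))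
    (ς : (p ≫ w₁) ≫ z ≅ (q ≫ w₂) ≫ z) (η : (r ≫ w₁) ≫ z ≅ (s ≫ w₂) ≫ z) :
    ∃ (G A₃ : B) (t₁ : G ⟶ E) (t₂ : G ⟶ F) (t₃ : A₃ ⟶ G)
      (ε' : t₁ ≫ p ≅ t₂ ≫ r) (κ : t₃ ≫ t₂ ≫ s ≅ t₃ ≫ t₁ ≫ q),
      W (t₁ ≫ p) ∧ W t₃ ∧
      (t₃ ≫ t₁) ◁ ς.hom =
        eqToHom (by simp) ≫ (t₃ ◁ ε'.hom) ▷ (w₁ ≫ z) ≫ eqToHom (by simp) ≫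
          (t₃ ≫ t₂) ◁ η.hom ≫ eqToHom (by simp) ≫ κ.hom ▷ (w₂ ≫ z) ≫
          eqToHom (by simp) := by
  obtain ⟨D, a, hap⟩ := hBF.exists_comp_mem_of_comp_mem (f := p) hzw₁ (by simpa using hp)
  obtain ⟨G, t, t₂, ht, ⟨ε'⟩⟩ :=
    hBF.exists_span_iso_of_comp_mem (a ≫ p) (f₂ := r) hzw₁ (by simpa using hr)
  obtain ⟨A₃, t₃, κ, ht₃, hpasting⟩ := hBF.exists_whiskerLeft_eq_pasting w₁ w₂ z hzw₂ ς η
    (eqToIso (Category.assoc t a p) ≪≫ ε')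
  have htap : W ((t ≫ a) ≫ p) := by simpa using hBF.bf2 _ _ ht hap
  exact ⟨G, A₃, t ≫ a, t₂, t₃, _, κ, htap, ht₃, hpasting⟩
end

section
/- Let C be a 2-category, W a class of 1-morphisms satisfying (BF1)–(BF5), and fix morphisms f^m = (A^m, w^m, f^m) : A → B (m = 1, 2) of the bicategory of fractions, i.e. w^m : A^m → A in W and f^m : A^m → B. Fix an object A³, morphisms v¹ : A³ → A¹ and v² : A³ → A² with w¹ ∘ v¹ ∈ W, an invertible 2-morphism α : w¹ ∘ v¹ ⇒ w² ∘ v², and two 2-morphisms γ, γ' : f¹ ∘ v¹ ⇒ f² ∘ v². Then the following are equivalent: (i) the quintuples (A³, v¹, v², α, γ) and (A³, v¹, v², α, γ') are equivalent in Pronk's sense (i.e. define the same 2-morphism of the bicategory of fractions); (ii) there exist an object A⁴ and a morphism z : A⁴ → A³ in W such that γ ▷ z = γ' ▷ z; (iii) there exist an object A⁴ and a morphism z : A⁴ → A³ such that v¹ ∘ z ∈ W and γ ▷ z = γ' ▷ z. -/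
open CategoryTheory CategoryTheory.Bicategory

universe w v u


variable {B : Type u} [Bicategory.{w, v} B]

/-- The data of a representative of a 2-morphism in Pronk's bicategory of fractions:
a quintuple `(obj, v₁, v₂, α, β)`. -/
structure PronkSq {A Bb A₁ A₂ : B}
    (w₁ : A₁ ⟶ A) (f₁ : A₁ ⟶ Bb) (w₂ : A₂ ⟶ A) (f₂ : A₂ ⟶ Bb) where
  obj : B
  v₁ : obj ⟶ A₁
  v₂ : obj ⟶ A₂
  α : v₁ ≫ w₁ ⟶ v₂ ≫ w₂
  β : v₁ ≫ f₁ ⟶ v₂ ≫ f₂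

/-- Pronk's relation on quintuples representing 2-morphisms of the bicategory
of fractions. -/
def PronkRel (W : ∀ ⦃X Y : B⦄, (X ⟶ Y) → Prop) {A Bb A₁ A₂ : B}
    (w₁ : A₁ ⟶ A) (f₁ : A₁ ⟶ Bb) (w₂ : A₂ ⟶ A) (f₂ : A₂ ⟶ Bb)
    (Q Q' : PronkSq w₁ f₁ w₂ f₂) : Prop :=
  ∃ (A₄ : B) (z : A₄ ⟶ Q.obj) (z' : A₄ ⟶ Q'.obj)
    (σ₁ : z' ≫ Q'.v₁ ≅ z ≫ Q.v₁) (σ₂ : z ≫ Q.v₂ ≅ z' ≫ Q'.v₂),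
    W ((z ≫ Q.v₁) ≫ w₁) ∧
    (σ₁.hom ▷ w₁ ≫ (α_ z Q.v₁ w₁).hom ≫ z ◁ Q.α ≫ (α_ z Q.v₂ w₂).inv ≫ σ₂.hom ▷ w₂
       = (α_ z' Q'.v₁ w₁).hom ≫ z' ◁ Q'.α ≫ (α_ z' Q'.v₂ w₂).inv) ∧
    (σ₁.hom ▷ f₁ ≫ (α_ z Q.v₁ f₁).hom ≫ z ◁ Q.β ≫ (α_ z Q.v₂ f₂).inv ≫ σ₂.hom ▷ f₂
       = (α_ z' Q'.v₁ f₁).hom ≫ z' ◁ Q'.β ≫ (α_ z' Q'.v₂ f₂).inv)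
attribute [local simp] Bicategory.Strict.associator_eqToIso
  Bicategory.Strict.leftUnitor_eqToIso Bicategory.Strict.rightUnitor_eqToIso

section Aux
variable [Bicategory.Strict B] {W : ∀ ⦃X Y : B⦄, (X ⟶ Y) → Prop}

/-- local faithfulness over W -/
lemma loc_faithful (hBF : PronkBF W) {X Y Z : B} (wm : Y ⟶ X) (hw : W wm) {g h : Z ⟶ Y} (β β' : g ⟶ h)
    (hβ : β ▷ wm = β' ▷ wm) : ∃ (E : B) (u : E ⟶ Z), W u ∧ u ◁ β = u ◁ β' := by
  obtain ⟨E, um, um', ζ, hWu, heq⟩ := hBF.bf4c wm g h (β ▷ wm) (𝟙 Z)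
    (eqToHom (by simp) ≫ β ≫ eqToHom (by simp)) (𝟙 Z)
    (eqToHom (by simp) ≫ β' ≫ eqToHom (by simp)) hw (hBF.bf1 Z) (hBF.bf1 Z)
    (by simp) (by simp [← hβ])
  set ζ' : um ≅ um' := eqToIso (Category.comp_id um).symm ≪≫ ζ ≪≫ eqToIso (Category.comp_id um') with hζ'
  have hz : ζ.hom = eqToHom (Category.comp_id um) ≫ ζ'.hom ≫ eqToHom (Category.comp_id um').symm := by
    simp [hζ']
  rw [hz] at heq
  simp at heq
  refine ⟨E, um, by simpa using hWu, ?_⟩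
  have h1 : ζ'.hom ▷ g ≫ um' ◁ β' = um ◁ β ≫ ζ'.hom ▷ h := by
    have h2 := (cancel_epi (eqToHom (by simp : (um ≫ 𝟙 Z) ≫ g = um ≫ g))).1
      (by simpa using heq)
    exact (cancel_mono (eqToHom (by simp : um' ≫ h = (um' ≫ 𝟙 Z) ≫ h))).1 (by simpa using h2)
  rw [← whisker_exchange] at h1
  exact ((cancel_mono (ζ'.hom ▷ h)).1 h1).symm

/-- transport of W along equality -/
lemma wEq {X Y : B} {f g : X ⟶ Y} (h : f = g) (hf : W f) : W g := h ▸ hf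

/-- refinement: if w and f ≫ w are in W then f becomes W after precomposition -/
lemma refineW (hBF : PronkBF W) {X Y Z : B} (wm : Y ⟶ X) (f : Z ⟶ Y) (hw : W wm)
    (hfw : W (f ≫ wm)) : ∃ (E : B) (r : E ⟶ Z), W (r ≫ f) := by
  obtain ⟨D, w', f', hw', ⟨ρ⟩⟩ := hBF.bf3 (f ≫ wm) wm hfw
  have hIso : IsIso (ρ.hom ≫ eqToHom (by simp : f' ≫ f ≫ wm = (f' ≫ f) ≫ wm)) :=
    inferInstance
  obtain ⟨E, vm, βl, hWv, hIβ, -⟩ := hBF.bf4b wm w' (f' ≫ f)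
    (ρ.hom ≫ eqToHom (by simp)) hw hIso
  have h1 : W (vm ≫ w') := hBF.bf2 vm w' hWv hw'
  have h2 : W (vm ≫ f' ≫ f) := by
    refine hBF.bf5 _ _ h1 ⟨?_⟩
    exact (eqToIso (by simp : vm ≫ f' ≫ f = vm ≫ (f' ≫ f))) ≪≫ (asIso βl).symm
  exact ⟨E, vm ≫ f', wEq (by simp) h2⟩
end Aux

section Main
variable [Bicategory.Strict B] {W : ∀ ⦃X Y : B⦄, (X ⟶ Y) → Prop}

lemma keyStep (hBF : PronkBF W) {A Bb A₁ A₂ A₃ : B}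
    (w₁ : A₁ ⟶ A) (f₁ : A₁ ⟶ Bb) (w₂ : A₂ ⟶ A) (f₂ : A₂ ⟶ Bb)
    (hw₁ : W w₁) (hw₂ : W w₂)
    (v₁ : A₃ ⟶ A₁) (v₂ : A₃ ⟶ A₂) (hv : W (v₁ ≫ w₁))
    (α : v₁ ≫ w₁ ⟶ v₂ ≫ w₂) (hα : IsIso α)
    (γ γ' : v₁ ≫ f₁ ⟶ v₂ ≫ f₂)
    (hrel : PronkRel W w₁ f₁ w₂ f₂ ⟨A₃, v₁, v₂, α, γ⟩ ⟨A₃, v₁, v₂, α, γ'⟩) :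
    ∃ (A₄ : B) (zz : A₄ ⟶ A₃), W zz ∧ zz ◁ γ = zz ◁ γ' := by
  obtain ⟨A₄, z, z', σ₁, σ₂, hWz, eα, eβ⟩ := hrel
  -- Step 1: lift σ₁ along v₁ ≫ w₁ using BF4b
  have hIc : IsIso ((eqToHom (by simp : z ≫ v₁ ≫ w₁ = (z ≫ v₁) ≫ w₁) ≫ σ₁.inv ▷ w₁ ≫
      eqToHom (by simp : (z' ≫ v₁) ≫ w₁ = z' ≫ v₁ ≫ w₁)) : z ≫ (v₁ ≫ w₁) ⟶ z' ≫ (v₁ ≫ w₁)) :=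
    inferInstance
  obtain ⟨D, t₀, η₀, hWt₀, hIη₀, hcond⟩ := hBF.bf4b (v₁ ≫ w₁) z z' _ hv hIc
  -- derive: (t₀ ◁ σ₁.inv conjugated) ▷ w₁ = (η₀ ▷ v₁) ▷ w₁
  have c1 : (eqToHom (by simp : (t₀ ≫ z) ≫ v₁ = t₀ ≫ z ≫ v₁) ≫ t₀ ◁ σ₁.inv ≫
      eqToHom (by simp : t₀ ≫ z' ≫ v₁ = (t₀ ≫ z') ≫ v₁)) ▷ w₁ = (η₀ ▷ v₁) ▷ w₁ := by
    simp at hcond ⊢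
    rw [eqToHom_comp_iff, comp_eqToHom_iff] at hcond
    rw [hcond]
    simp
  obtain ⟨E₁, u₁, hWu₁, hu₁⟩ := loc_faithful hBF w₁ hw₁ _ _ c1
  haveI := hIη₀
  set t : E₁ ⟶ A₄ := u₁ ≫ t₀ with ht
  set η : t ≫ z ⟶ t ≫ z' :=
    eqToHom (by simp [ht] : t ≫ z = u₁ ≫ t₀ ≫ z) ≫ u₁ ◁ η₀ ≫
      eqToHom (by simp [ht] : u₁ ≫ t₀ ≫ z' = t ≫ z') with hη
  haveI hIη : IsIso η := by rw [hη]; infer_instance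
  have F1 : t ◁ σ₁.inv =
      eqToHom (by simp [ht] : t ≫ z ≫ v₁ = (t ≫ z) ≫ v₁) ≫ η ▷ v₁ ≫
        eqToHom (by simp [ht] : (t ≫ z') ≫ v₁ = t ≫ z' ≫ v₁) := by
    clear_value η t
    subst ht
    simp [hη] at hu₁ ⊢
    rw [← hu₁]
    simp
  have P := congrArg (fun x => t ◁ x) eα
  simp at P
  haveI := hα
  have X : t ◁ z ◁ α ≫
      eqToHom (by simp : t ≫ z ≫ v₂ ≫ w₂ = ((t ≫ z) ≫ v₂) ≫ w₂) ≫ (η ▷ v₂) ▷ w₂ =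
      eqToHom (by simp : t ≫ z ≫ v₁ ≫ w₁ = ((t ≫ z) ≫ v₁) ≫ w₁) ≫ (η ▷ v₁) ▷ w₁ ≫
      eqToHom (by simp : ((t ≫ z') ≫ v₁) ≫ w₁ = t ≫ z' ≫ v₁ ≫ w₁) ≫ t ◁ z' ◁ α ≫
      eqToHom (by simp : t ≫ z' ≫ v₂ ≫ w₂ = ((t ≫ z') ≫ v₂) ≫ w₂) := by
    have X1 := congrArg (fun m =>
      eqToHom (by simp : t ≫ z ≫ v₁ ≫ w₁ = (t ≫ z) ≫ v₁ ≫ w₁) ≫ m ≫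
      eqToHom (by simp : (t ≫ z') ≫ v₂ ≫ w₂ = ((t ≫ z') ≫ v₂) ≫ w₂))
      (whisker_exchange η α)
    simpa using X1
  -- cancellation helper for σ₁ over w₁
  have hc : t ◁ σ₁.hom ▷ w₁ ≫ t ◁ σ₁.inv ▷ w₁ = 𝟙 _ := by
    rw [← Bicategory.whiskerLeft_comp, ← Bicategory.comp_whiskerRight]; simp
  have hc' : ∀ {c : E₁ ⟶ A} {m : (t ≫ (z' ≫ v₁) ≫ w₁) ⟶ c},
      t ◁ σ₁.hom ▷ w₁ ≫ t ◁ σ₁.inv ▷ w₁ ≫ m = m := by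
    intro c m
    calc t ◁ σ₁.hom ▷ w₁ ≫ t ◁ σ₁.inv ▷ w₁ ≫ m
        = (t ◁ σ₁.hom ▷ w₁ ≫ t ◁ σ₁.inv ▷ w₁) ≫ m := (Category.assoc _ _ _).symm
      _ = m := by rw [hc]; exact Category.id_comp m
  have F1' : η ▷ v₁ = eqToHom (by simp : (t ≫ z) ≫ v₁ = t ≫ z ≫ v₁) ≫ t ◁ σ₁.inv ≫
      eqToHom (by simp : t ≫ z' ≫ v₁ = (t ≫ z') ≫ v₁) := by
    rw [F1]; simp
  have Q := congrArg (fun m =>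
    t ◁ σ₁.hom ▷ w₁ ≫ eqToHom (by simp : t ≫ (z ≫ v₁) ≫ w₁ = t ≫ z ≫ v₁ ≫ w₁) ≫ m ≫
      eqToHom (by simp : ((t ≫ z') ≫ v₂) ≫ w₂ = t ≫ (z' ≫ v₂) ≫ w₂)) X
  rw [F1'] at Q
  simp [hc'] at Q
  have PQ := P.trans Q.symm
  have c2 : t ◁ σ₂.hom ▷ w₂ =
      eqToHom (by simp : t ≫ (z ≫ v₂) ≫ w₂ = ((t ≫ z) ≫ v₂) ≫ w₂) ≫ η ▷ v₂ ▷ w₂ ≫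
      eqToHom (by simp : ((t ≫ z') ≫ v₂) ≫ w₂ = t ≫ (z' ≫ v₂) ≫ w₂) := by
    have h3 := (cancel_epi _).1 ((cancel_epi _).1 ((cancel_epi _).1 PQ))
    rw [eqToHom_comp_iff] at h3
    rw [h3]
    simp
  have cond : (t ◁ σ₂.hom) ▷ w₂ =
      (eqToHom (by simp : t ≫ z ≫ v₂ = (t ≫ z) ≫ v₂) ≫ η ▷ v₂ ≫
        eqToHom (by simp : (t ≫ z') ≫ v₂ = t ≫ z' ≫ v₂)) ▷ w₂ := by
    simp
    rw [c2]
    simp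
  obtain ⟨E₂, u₂, hWu₂, hu₂⟩ := loc_faithful hBF w₂ hw₂ (t ◁ σ₂.hom) _ cond
  set s : E₂ ⟶ A₄ := u₂ ≫ t with hs
  set θ : s ≫ z ⟶ s ≫ z' := eqToHom (by simp [hs] : s ≫ z = u₂ ≫ t ≫ z) ≫ u₂ ◁ η ≫
    eqToHom (by simp [hs] : u₂ ≫ t ≫ z' = s ≫ z') with hθ
  haveI hIθ : IsIso θ := by rw [hθ]; infer_instance
  have G1 : s ◁ σ₁.inv = eqToHom (by simp [hs] : s ≫ z ≫ v₁ = (s ≫ z) ≫ v₁) ≫ θ ▷ v₁ ≫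
      eqToHom (by simp [hs] : (s ≫ z') ≫ v₁ = s ≫ z' ≫ v₁) := by
    have hF := congrArg (fun m => u₂ ◁ m) F1
    clear_value θ s
    subst hs
    simp [hθ] at hF ⊢
    rw [hF]
    simp
  have G2 : s ◁ σ₂.hom = eqToHom (by simp [hs] : s ≫ z ≫ v₂ = (s ≫ z) ≫ v₂) ≫ θ ▷ v₂ ≫
      eqToHom (by simp [hs] : (s ≫ z') ≫ v₂ = s ≫ z' ≫ v₂) := by
    have hF := hu₂
    clear_value θ s
    subst hs
    simp [hθ] at hF ⊢
    rw [hF]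
    simp
  have P₂ := congrArg (fun x => s ◁ x) eβ
  simp at P₂
  have X₂ : s ◁ z ◁ γ ≫
      eqToHom (by simp : s ≫ z ≫ v₂ ≫ f₂ = ((s ≫ z) ≫ v₂) ≫ f₂) ≫ (θ ▷ v₂) ▷ f₂ =
      eqToHom (by simp : s ≫ z ≫ v₁ ≫ f₁ = ((s ≫ z) ≫ v₁) ≫ f₁) ≫ (θ ▷ v₁) ▷ f₁ ≫
      eqToHom (by simp : ((s ≫ z') ≫ v₁) ≫ f₁ = s ≫ z' ≫ v₁ ≫ f₁) ≫ s ◁ z' ◁ γ ≫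
      eqToHom (by simp : s ≫ z' ≫ v₂ ≫ f₂ = ((s ≫ z') ≫ v₂) ≫ f₂) := by
    have X1 := congrArg (fun m =>
      eqToHom (by simp : s ≫ z ≫ v₁ ≫ f₁ = (s ≫ z) ≫ v₁ ≫ f₁) ≫ m ≫
      eqToHom (by simp : (s ≫ z') ≫ v₂ ≫ f₂ = ((s ≫ z') ≫ v₂) ≫ f₂))
      (whisker_exchange θ γ)
    simpa using X1
  have hc₂ : s ◁ σ₁.hom ▷ f₁ ≫ s ◁ σ₁.inv ▷ f₁ = 𝟙 _ := by
    rw [← Bicategory.whiskerLeft_comp, ← Bicategory.comp_whiskerRight]; simp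
  have hc₂' : ∀ {c : E₂ ⟶ Bb} {m : (s ≫ (z' ≫ v₁) ≫ f₁) ⟶ c},
      s ◁ σ₁.hom ▷ f₁ ≫ s ◁ σ₁.inv ▷ f₁ ≫ m = m := by
    intro c m
    calc s ◁ σ₁.hom ▷ f₁ ≫ s ◁ σ₁.inv ▷ f₁ ≫ m
        = (s ◁ σ₁.hom ▷ f₁ ≫ s ◁ σ₁.inv ▷ f₁) ≫ m := (Category.assoc _ _ _).symm
      _ = m := by rw [hc₂]; exact Category.id_comp m
  have G1' : θ ▷ v₁ = eqToHom (by simp : (s ≫ z) ≫ v₁ = s ≫ z ≫ v₁) ≫ s ◁ σ₁.inv ≫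
      eqToHom (by simp : s ≫ z' ≫ v₁ = (s ≫ z') ≫ v₁) := by
    rw [G1]; simp
  have Q₂ := congrArg (fun m =>
    s ◁ σ₁.hom ▷ f₁ ≫ eqToHom (by simp : s ≫ (z ≫ v₁) ≫ f₁ = s ≫ z ≫ v₁ ≫ f₁) ≫ m ≫
      eqToHom (by simp : ((s ≫ z') ≫ v₂) ≫ f₂ = s ≫ (z' ≫ v₂) ≫ f₂)) X₂
  rw [G1'] at Q₂
  simp [hc₂'] at Q₂
  have G2'' : s ◁ σ₂.hom ▷ f₂ =
      eqToHom (by simp : s ≫ (z ≫ v₂) ≫ f₂ = ((s ≫ z) ≫ v₂) ≫ f₂) ≫ θ ▷ v₂ ▷ f₂ ≫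
      eqToHom (by simp : ((s ≫ z') ≫ v₂) ≫ f₂ = s ≫ (z' ≫ v₂) ≫ f₂) := by
    rw [show s ◁ σ₂.hom ▷ f₂ =
        eqToHom (by simp : s ≫ (z ≫ v₂) ≫ f₂ = (s ≫ z ≫ v₂) ≫ f₂) ≫ (s ◁ σ₂.hom) ▷ f₂ ≫
        eqToHom (by simp : (s ≫ z' ≫ v₂) ≫ f₂ = s ≫ (z' ≫ v₂) ≫ f₂) from by simp, G2]
    simp
  rw [G2''] at P₂
  simp at P₂
  have PQ₂ := Q₂.symm.trans P₂
  have hfin : s ◁ z' ◁ γ = s ◁ z' ◁ γ' := by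
    have h4 := (cancel_epi (eqToHom (by simp : s ≫ (z' ≫ v₁) ≫ f₁ = s ≫ z' ≫ v₁ ≫ f₁))).1 PQ₂
    exact (cancel_mono (eqToHom (by simp : s ≫ z' ≫ v₂ ≫ f₂ = s ≫ (z' ≫ v₂) ≫ f₂))).1 h4
  have hWz' : W ((z' ≫ v₁) ≫ w₁) := hBF.bf5 _ _ hWz ⟨Bicategory.whiskerRightIso σ₁ w₁⟩
  have hWt : W t := by rw [ht]; exact hBF.bf2 u₁ t₀ hWu₁ hWt₀
  have hWs : W s := by rw [hs]; exact hBF.bf2 u₂ t hWu₂ hWt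
  have hWcomp : W ((s ≫ z') ≫ (v₁ ≫ w₁)) :=
    wEq (by simp) (hBF.bf2 s ((z' ≫ v₁) ≫ w₁) hWs hWz')
  obtain ⟨E₃, r, hWr⟩ := refineW hBF (v₁ ≫ w₁) (s ≫ z') hv hWcomp
  refine ⟨E₃, r ≫ (s ≫ z'), hWr, ?_⟩
  simp
  rw [hfin]
end Main


/-- Lemma lem-01: comparison criterion for two quintuples sharing all data
except the last 2-cell. -/

theorem statement6 {B : Type u} [Bicategory.{w, v} B] [Bicategory.Strict B]
    (W : ∀ ⦃X Y : B⦄, (X ⟶ Y) → Prop) (hBF : PronkBF W)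
    {A Bb A₁ A₂ A₃ : B}
    (w₁ : A₁ ⟶ A) (f₁ : A₁ ⟶ Bb) (w₂ : A₂ ⟶ A) (f₂ : A₂ ⟶ Bb)
    (hw₁ : W w₁) (hw₂ : W w₂)
    (v₁ : A₃ ⟶ A₁) (v₂ : A₃ ⟶ A₂) (hv : W (v₁ ≫ w₁))
    (α : v₁ ≫ w₁ ⟶ v₂ ≫ w₂) (hα : IsIso α)
    (γ γ' : v₁ ≫ f₁ ⟶ v₂ ≫ f₂) :
    (PronkRel W w₁ f₁ w₂ f₂ ⟨A₃, v₁, v₂, α, γ⟩ ⟨A₃, v₁, v₂, α, γ'⟩ ↔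
      ∃ (A₄ : B) (zz : A₄ ⟶ A₃), W zz ∧ zz ◁ γ = zz ◁ γ') ∧
    (PronkRel W w₁ f₁ w₂ f₂ ⟨A₃, v₁, v₂, α, γ⟩ ⟨A₃, v₁, v₂, α, γ'⟩ ↔
      ∃ (A₄ : B) (zz : A₄ ⟶ A₃), W (zz ≫ v₁) ∧ zz ◁ γ = zz ◁ γ') := by
  have h1 : PronkRel W w₁ f₁ w₂ f₂ ⟨A₃, v₁, v₂, α, γ⟩ ⟨A₃, v₁, v₂, α, γ'⟩ →
      ∃ (A₄ : B) (zz : A₄ ⟶ A₃), W zz ∧ zz ◁ γ = zz ◁ γ' :=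
    keyStep hBF w₁ f₁ w₂ f₂ hw₁ hw₂ v₁ v₂ hv α hα γ γ'
  have h2 : (∃ (A₄ : B) (zz : A₄ ⟶ A₃), W zz ∧ zz ◁ γ = zz ◁ γ') →
      ∃ (A₄ : B) (zz : A₄ ⟶ A₃), W (zz ≫ v₁) ∧ zz ◁ γ = zz ◁ γ' := by
    rintro ⟨A₄, zz, hWzz, h⟩
    obtain ⟨E, r, hWr⟩ := refineW hBF w₁ (zz ≫ v₁) hw₁
      (wEq (by simp) (hBF.bf2 zz (v₁ ≫ w₁) hWzz hv))
    refine ⟨E, r ≫ zz, wEq (by simp) hWr, ?_⟩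
    simp
    rw [h]
  have h3 : (∃ (A₄ : B) (zz : A₄ ⟶ A₃), W (zz ≫ v₁) ∧ zz ◁ γ = zz ◁ γ') →
      PronkRel W w₁ f₁ w₂ f₂ ⟨A₃, v₁, v₂, α, γ⟩ ⟨A₃, v₁, v₂, α, γ'⟩ := by
    rintro ⟨A₄, zz, hWzz, h⟩
    exact ⟨A₄, zz, zz, Iso.refl _, Iso.refl _, hBF.bf2 (zz ≫ v₁) w₁ hWzz hw₁,
      by simp, by simp [h]⟩
  exact ⟨⟨h1, fun h => h3 (h2 h)⟩, ⟨fun h => h2 (h1 h), h3⟩⟩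
end

section
/- Let C be a 2-category and W a class of 1-morphisms satisfying (BF1)–(BF5). Let f^m = (A^m, w^m, f^m) : A → B (m = 1, 2) be 1-morphisms of the bicategory of fractions and Γ, Γ' two 2-morphisms from f¹ to f² (equivalence classes of quintuples as in Pronk). Then there exist an object A³, a morphism v¹ : A³ → A¹ in W, a morphism v² : A³ → A², an invertible 2-morphism α : w¹ ∘ v¹ ⇒ w² ∘ v², and 2-morphisms γ, γ' : f¹ ∘ v¹ ⇒ f² ∘ v² such that Γ = [A³, v¹, v², α, γ] and Γ' = [A³, v¹, v², α, γ']; that is, any two parallel 2-morphisms of the bicategory of fractions admit representatives differing at most in the last component. -/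
open CategoryTheory CategoryTheory.Bicategory

universe w v u


variable {B : Type u} [Bicategory.{w, v} B]

/-!
Refining along morphisms of `W` (BF3, then BF4 to replace the resulting 2-cells over `w₁` by
invertible 2-cells upstairs), the first legs of both representatives become isomorphic to one
leg `v ∈ W`. Over `v`, the two `α`-components are invertible 2-cells from `v ≫ w₁` into
`(z ≫ Γ.v₂) ≫ w₂` and `(z' ≫ Γ'.v₂) ≫ w₂`; BF4 for `w₂` turns the inverse of the first followed
by the second into an invertible 2-cell `δ` between the second legs after one more refinement
`u ∈ W`. Transported along `δ`, the `α`-component of `Γ` becomes that of `Γ'`.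
-/

namespace PronkSq

variable {A A₁ A₂ N : B} {w₁ : A₁ ⟶ A} {w₂ : A₂ ⟶ A} {v₁ : N ⟶ A₁} {v₂ : N ⟶ A₂}

/-- The pasting of `α` with `z`, `σ₁` and `σ₂` that `PronkRel` compares. -/
def reindex {K : B} {z : K ⟶ N} {V₁ : K ⟶ A₁} {V₂ : K ⟶ A₂} (σ₁ : V₁ ≅ z ≫ v₁)
    (σ₂ : z ≫ v₂ ≅ V₂) (α : v₁ ≫ w₁ ⟶ v₂ ≫ w₂) : V₁ ≫ w₁ ⟶ V₂ ≫ w₂ :=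
  σ₁.hom ▷ w₁ ≫ (α_ z v₁ w₁).hom ≫ z ◁ α ≫ (α_ z v₂ w₂).inv ≫ σ₂.hom ▷ w₂

instance {K : B} {z : K ⟶ N} {V₁ : K ⟶ A₁} {V₂ : K ⟶ A₂} (σ₁ : V₁ ≅ z ≫ v₁)
    (σ₂ : z ≫ v₂ ≅ V₂) (α : v₁ ≫ w₁ ⟶ v₂ ≫ w₂) [IsIso α] : IsIso (reindex σ₁ σ₂ α) := by
  unfold reindex; infer_instance

end PronkSq

open PronkSq

theorem pronkRel_reindex {W : ∀ ⦃X Y : B⦄, (X ⟶ Y) → Prop} (hBF : PronkBF W)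
    {A Bb A₁ A₂ : B} {w₁ : A₁ ⟶ A} {f₁ : A₁ ⟶ Bb} {w₂ : A₂ ⟶ A} {f₂ : A₂ ⟶ Bb}
    (Q : PronkSq w₁ f₁ w₂ f₂) {N : B} {z : N ⟶ Q.obj} {V₁ : N ⟶ A₁} {V₂ : N ⟶ A₂}
    (σ₁ : V₁ ≅ z ≫ Q.v₁) (σ₂ : z ≫ Q.v₂ ≅ V₂) (hV : W (V₁ ≫ w₁)) :
    PronkRel W w₁ f₁ w₂ f₂ Q ⟨N, V₁, V₂, reindex σ₁ σ₂ Q.α, reindex σ₁ σ₂ Q.β⟩ := by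
  refine ⟨N, z, 𝟙 N, λ_ V₁ ≪≫ σ₁, σ₂ ≪≫ (λ_ V₂).symm,
    hBF.bf5 _ _ hV ⟨whiskerRightIso σ₁.symm w₁⟩, ?_, ?_⟩ <;>
  · simp only [reindex, Iso.trans_hom, Iso.symm_hom, comp_whiskerRight]
    bicategory

namespace PronkBF

variable {W : ∀ ⦃X Y : B⦄, (X ⟶ Y) → Prop} (hBF : PronkBF W)
include hBF

theorem exists_comp_iso_comp {A A₁ X Y : B} {w : A₁ ⟶ A} (hw : W w) (V : X ⟶ A₁)
    {t : Y ⟶ A₁} (ht : W (t ≫ w)) :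
    ∃ (N : B) (b : N ⟶ X) (p : N ⟶ Y), W b ∧ Nonempty (b ≫ V ≅ p ≫ t) := by
  obtain ⟨D, b, p, hb, ⟨φ⟩⟩ := hBF.bf3 (t ≫ w) (V ≫ w) ht
  obtain ⟨E, u, β, hu, hβ, -⟩ := hBF.bf4b w (b ≫ V) (p ≫ t)
    ((α_ b V w).hom ≫ φ.hom ≫ (α_ p t w).inv) hw inferInstance
  have := hβ
  exact ⟨E, u ≫ b, u ≫ p, hBF.bf2 _ _ hu hb, ⟨α_ u b V ≪≫ asIso β ≪≫ (α_ u p t).symm⟩⟩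

theorem exists_common_refinement {A A₁ Y Y' : B} {w : A₁ ⟶ A} (hw : W w)
    {t : Y ⟶ A₁} {t' : Y' ⟶ A₁} (ht : W (t ≫ w)) (ht' : W (t' ≫ w)) :
    ∃ (N : B) (v : N ⟶ A₁) (z : N ⟶ Y) (z' : N ⟶ Y'),
      W v ∧ Nonempty (v ≅ z ≫ t) ∧ Nonempty (v ≅ z' ≫ t') := by
  obtain ⟨N₀, b, p, hb, ⟨φ⟩⟩ := hBF.exists_comp_iso_comp hw (𝟙 A₁) ht
  obtain ⟨N, c, p', hc, ⟨φ'⟩⟩ := hBF.exists_comp_iso_comp hw b ht'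
  exact ⟨N, c ≫ b, c ≫ p, p', hBF.bf2 _ _ hc hb,
    ⟨whiskerLeftIso c ((ρ_ b).symm ≪≫ φ) ≪≫ (α_ c p t).symm⟩, ⟨φ'⟩⟩

theorem exists_whiskerLeft_comp_whiskerRight_eq {A A₂ N : B} {w : A₂ ⟶ A} (hw : W w)
    {g : N ⟶ A} {x x' : N ⟶ A₂} (α : g ⟶ x ≫ w) (α' : g ⟶ x' ≫ w) [IsIso α] [IsIso α'] :
    ∃ (E : B) (u : E ⟶ N) (δ : u ≫ x ⟶ u ≫ x'), W u ∧ IsIso δ ∧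
      u ◁ α ≫ (α_ u x w).inv ≫ δ ▷ w ≫ (α_ u x' w).hom = u ◁ α' := by
  obtain ⟨E, u, δ, hu, hδ, h⟩ := hBF.bf4b w x x' (inv α ≫ α') hw inferInstance
  refine ⟨E, u, δ, hu, hδ, ?_⟩
  rw [← h, ← whiskerLeft_comp, IsIso.hom_inv_id_assoc]

end PronkBF

theorem statement7_general {B : Type u} [Bicategory.{w, v} B]
    (W : ∀ ⦃X Y : B⦄, (X ⟶ Y) → Prop) (hBF : PronkBF W)
    {A Bb A₁ A₂ : B}
    (w₁ : A₁ ⟶ A) (f₁ : A₁ ⟶ Bb) (w₂ : A₂ ⟶ A) (f₂ : A₂ ⟶ Bb)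
    (hw₁ : W w₁) (hw₂ : W w₂)
    (Γ Γ' : PronkSq w₁ f₁ w₂ f₂)
    (hΓ : W (Γ.v₁ ≫ w₁)) (hΓα : IsIso Γ.α)
    (hΓ' : W (Γ'.v₁ ≫ w₁)) (hΓ'α : IsIso Γ'.α) :
    ∃ (A₃ : B) (v₁ : A₃ ⟶ A₁) (v₂ : A₃ ⟶ A₂) (α : v₁ ≫ w₁ ⟶ v₂ ≫ w₂)
      (γ γ' : v₁ ≫ f₁ ⟶ v₂ ≫ f₂),
      W v₁ ∧ IsIso α ∧
      PronkRel W w₁ f₁ w₂ f₂ Γ ⟨A₃, v₁, v₂, α, γ⟩ ∧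
      PronkRel W w₁ f₁ w₂ f₂ Γ' ⟨A₃, v₁, v₂, α, γ'⟩ := by
  obtain ⟨N, v, z, z', hv, ⟨σ⟩, ⟨σ'⟩⟩ := hBF.exists_common_refinement hw₁ hΓ hΓ'
  obtain ⟨E, u, δ, hu, hδ, hδα⟩ := hBF.exists_whiskerLeft_comp_whiskerRight_eq hw₂
    (reindex σ (Iso.refl _) Γ.α) (reindex σ' (Iso.refl _) Γ'.α)
  have := hδ
  have huv : W ((u ≫ v) ≫ w₁) := hBF.bf2 _ _ (hBF.bf2 _ _ hu hv) hw₁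
  let τ := whiskerLeftIso u σ ≪≫ (α_ u z Γ.v₁).symm
  let τ' := whiskerLeftIso u σ' ≪≫ (α_ u z' Γ'.v₁).symm
  have hα : reindex τ (α_ u z Γ.v₂ ≪≫ asIso δ) Γ.α = reindex τ' (α_ u z' Γ'.v₂) Γ'.α :=
    calc _ = (α_ u v w₁).hom ≫ (u ◁ reindex σ (Iso.refl _) Γ.α ≫ (α_ u _ w₂).inv ≫ δ ▷ w₂ ≫
          (α_ u _ w₂).hom) ≫ (α_ u _ w₂).inv := by
          simp only [τ, reindex, Iso.trans_hom, Iso.symm_hom, whiskerLeftIso_hom, Iso.refl_hom,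
            asIso_hom]
          bicategory
      _ = (α_ u v w₁).hom ≫ u ◁ reindex σ' (Iso.refl _) Γ'.α ≫ (α_ u _ w₂).inv := by
          rw [hδα]
      _ = _ := by
          simp only [τ', reindex, Iso.trans_hom, Iso.symm_hom, whiskerLeftIso_hom, Iso.refl_hom]
          bicategory
  refine ⟨E, u ≫ v, u ≫ z' ≫ Γ'.v₂, _, _, _, hBF.bf2 _ _ hu hv, inferInstance,
    hα ▸ pronkRel_reindex hBF Γ τ (α_ u z Γ.v₂ ≪≫ asIso δ) huv,
    pronkRel_reindex hBF Γ' τ' (α_ u z' Γ'.v₂) huv⟩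

/-- Proposition prop-05, first part: any two parallel 2-morphisms of the
bicategory of fractions admit representatives differing at most in the last component. -/
theorem statement7 {B : Type u} [Bicategory.{w, v} B] [Bicategory.Strict B]
    (W : ∀ ⦃X Y : B⦄, (X ⟶ Y) → Prop) (hBF : PronkBF W)
    {A Bb A₁ A₂ : B}
    (w₁ : A₁ ⟶ A) (f₁ : A₁ ⟶ Bb) (w₂ : A₂ ⟶ A) (f₂ : A₂ ⟶ Bb)
    (hw₁ : W w₁) (hw₂ : W w₂)
    (Γ Γ' : PronkSq w₁ f₁ w₂ f₂)
    (hΓ : W (Γ.v₁ ≫ w₁)) (hΓα : IsIso Γ.α)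
    (hΓ' : W (Γ'.v₁ ≫ w₁)) (hΓ'α : IsIso Γ'.α) :
    ∃ (A₃ : B) (v₁ : A₃ ⟶ A₁) (v₂ : A₃ ⟶ A₂) (α : v₁ ≫ w₁ ⟶ v₂ ≫ w₂)
      (γ γ' : v₁ ≫ f₁ ⟶ v₂ ≫ f₂),
      W v₁ ∧ IsIso α ∧
      PronkRel W w₁ f₁ w₂ f₂ Γ ⟨A₃, v₁, v₂, α, γ⟩ ∧
      PronkRel W w₁ f₁ w₂ f₂ Γ' ⟨A₃, v₁, v₂, α, γ'⟩ :=
  statement7_general W hBF w₁ f₁ w₂ f₂ hw₁ hw₂ Γ Γ' hΓ hΓα hΓ' hΓ'α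
end

section
/- Let C be a 2-category and W a class of 1-morphisms satisfying (BF1)–(BF5). Let w¹ : A¹ → A be in W, and let v¹ : A³ → A¹, u : A⁴ → A³ be 1-morphisms with w¹ ∘ v¹ ∈ W and v¹ ∘ u ∈ W. Suppose β : f¹ ∘ v¹ ⇒ f² ∘ v² is a 2-morphism such that β ▷ u is invertible. Then there exist an object A'⁴ and a morphism u' : A'⁴ → A³ belonging to W such that β ▷ u' is invertible. (This is the implication (iv) ⇒ (iii) in the invertibility criterion for 2-morphisms of a bicategory of fractions.) -/
open CategoryTheory CategoryTheory.Bicategory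

universe w v u


/-- Derived lemma: if `z ∈ W` and `w ≫ z ∈ W` then there exists `v` with `v ≫ w ∈ W`. -/
lemma pronk_div {B : Type u} [Bicategory.{w, v} B] [Bicategory.Strict B]
    (W : ∀ ⦃X Y : B⦄, (X ⟶ Y) → Prop) (hBF : PronkBF W)
    {X Y Z : B} (wm : X ⟶ Y) (z : Y ⟶ Z) (hz : W z) (hwz : W (wm ≫ z)) :
    ∃ (D : B) (v : D ⟶ X), W (v ≫ wm) := by
  obtain ⟨D, w', f', hw', ⟨ρ⟩⟩ := hBF.bf3 (wm ≫ z) z hwz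
  -- ρ : w' ≫ z ≅ f' ≫ (wm ≫ z)
  have hα : IsIso (ρ.hom ≫ eqToHom (show f' ≫ wm ≫ z = (f' ≫ wm) ≫ z by
      rw [Bicategory.Strict.assoc])) := by infer_instance
  obtain ⟨E, vm, γ, hvm, hγ, -⟩ := hBF.bf4b z w' (f' ≫ wm)
    (ρ.hom ≫ eqToHom (show f' ≫ wm ≫ z = (f' ≫ wm) ≫ z by rw [Bicategory.Strict.assoc]))
    hz hα
  refine ⟨E, vm ≫ f', ?_⟩
  have h1 : W (vm ≫ w') := hBF.bf2 _ _ hvm hw'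
  have h2 : W (vm ≫ f' ≫ wm) := hBF.bf5 _ _ h1 ⟨(asIso γ).symm⟩
  rw [Bicategory.Strict.assoc]
  exact h2

/-- implication (iv) ⇒ (iii) in the invertibility criterion for 2-morphisms
of a bicategory of fractions. -/
theorem statement9 {B : Type u} [Bicategory.{w, v} B] [Bicategory.Strict B]
    (W : ∀ ⦃X Y : B⦄, (X ⟶ Y) → Prop) (hBF : PronkBF W)
    {A Bb A₁ A₂ A₃ A₄ : B}
    (w₁ : A₁ ⟶ A) (hw₁ : W w₁)
    (f₁ : A₁ ⟶ Bb) (f₂ : A₂ ⟶ Bb)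
    (v₁ : A₃ ⟶ A₁) (v₂ : A₃ ⟶ A₂) (hv₁ : W (v₁ ≫ w₁))
    (u : A₄ ⟶ A₃) (hu : W (u ≫ v₁))
    (β : v₁ ≫ f₁ ⟶ v₂ ≫ f₂) (hβ : IsIso (u ◁ β)) :
    ∃ (A₄' : B) (u' : A₄' ⟶ A₃), W u' ∧ IsIso (u' ◁ β) := by
  have hz : W (u ≫ v₁ ≫ w₁) := by
    rw [← Bicategory.Strict.assoc]
    exact hBF.bf2 _ _ hu hw₁
  obtain ⟨D, v, hv⟩ := pronk_div W hBF u (v₁ ≫ w₁) hv₁ hz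
  refine ⟨D, v ≫ u, hv, ?_⟩
  rw [Bicategory.comp_whiskerLeft]
  infer_instance
end

section
/- Let C be a 2-category and W a class of 1-morphisms satisfying (BF1)–(BF5). Fix 1-morphisms f^m = (A^m, w^m, f^m) : A → B (m = 1, 2) of the bicategory of fractions and a fixed choice (E, p : E → A¹ in W, q : E → A², ς : w¹ ∘ p ⇒ w² ∘ q invertible) completing the cospan (w¹, w²). Define a relation on triples (A³, t : A³ → E with t ∈ W, φ : f¹ ∘ p ∘ t ⇒ f² ∘ q ∘ t): (A³, t, φ) ∼ (A'³, t', φ') iff there exist A⁴, u : A⁴ → A³ in W, u' : A⁴ → A'³, and an invertible σ : t' ∘ u' ⇒ t ∘ u such that φ ▷ u pasted with f¹ ∘ p ◁ σ and (f² ∘ q ◁ σ)⁻¹ equals φ' ▷ u'. Then ∼ is an equivalence relation. -/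
open CategoryTheory CategoryTheory.Bicategory

universe w v u


variable {B : Type u} [Bicategory.{w, v} B]

/-- An "almost canonical" representative of a 2-morphism in a bicategory of fractions
(relative to a fixed choice `(E, p, q, ς)` completing the cospan `(w₁, w₂)`): a triple
`(obj, t, φ)` with `t ∈ W`. -/
structure AlmostTriple (W : ∀ ⦃X Y : B⦄, (X ⟶ Y) → Prop)
    {Bb A₁ A₂ E : B} (f₁ : A₁ ⟶ Bb) (f₂ : A₂ ⟶ Bb) (p : E ⟶ A₁) (q : E ⟶ A₂) where
  obj : B
  t : obj ⟶ E
  ht : W t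
  φ : (t ≫ p) ≫ f₁ ⟶ (t ≫ q) ≫ f₂

/-- The relation `∼` on almost canonical triples. -/
def TripleRel (W : ∀ ⦃X Y : B⦄, (X ⟶ Y) → Prop)
    {Bb A₁ A₂ E : B} (f₁ : A₁ ⟶ Bb) (f₂ : A₂ ⟶ Bb) (p : E ⟶ A₁) (q : E ⟶ A₂)
    (T T' : AlmostTriple W f₁ f₂ p q) : Prop :=
  ∃ (A₄ : B) (u : A₄ ⟶ T.obj) (u' : A₄ ⟶ T'.obj) (σ : u' ≫ T'.t ≅ u ≫ T.t),
    W u ∧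
    σ.hom ▷ (p ≫ f₁) ≫ (α_ u T.t (p ≫ f₁)).hom ≫ u ◁ (α_ T.t p f₁).inv ≫
        u ◁ T.φ ≫ u ◁ (α_ T.t q f₂).hom ≫ (α_ u T.t (q ≫ f₂)).inv ≫ σ.inv ▷ (q ≫ f₂)
      = (α_ u' T'.t (p ≫ f₁)).hom ≫ u' ◁ (α_ T'.t p f₁).inv ≫ u' ◁ T'.φ ≫
        u' ◁ (α_ T'.t q f₂).hom ≫ (α_ u' T'.t (q ≫ f₂)).inv

theorem precomp_lemma {B : Type u} [Bicategory.{w, v} B] [Bicategory.Strict B]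
    {W : ∀ ⦃X Y : B⦄, (X ⟶ Y) → Prop} (hBF : PronkBF W)
    {X Y Z : B} (t' : Y ⟶ Z) (u' : X ⟶ Y) (ht' : W t') (h : W (u' ≫ t')) :
    ∃ (D : B) (s : D ⟶ X), W (s ≫ u') := by
  obtain ⟨D, v, g, hv, ⟨ι⟩⟩ := hBF.bf3 (u' ≫ t') t' h
  obtain ⟨D', r, β, hr, hβ, -⟩ := hBF.bf4b t' v (g ≫ u')
    (ι.hom ≫ eqToHom (Category.assoc g u' t').symm) ht' inferInstance
  refine ⟨D', r ≫ g, ?_⟩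
  rw [Category.assoc]
  exact hBF.bf5 _ _ (hBF.bf2 _ _ hr hv) ⟨(asIso β).symm⟩
/-- the relation `∼` on almost canonical triples is an equivalence
relation. -/
theorem statement11 {B : Type u} [Bicategory.{w, v} B] [Bicategory.Strict B]
    (W : ∀ ⦃X Y : B⦄, (X ⟶ Y) → Prop) (hBF : PronkBF W)
    {A Bb A₁ A₂ E : B}
    (w₁ : A₁ ⟶ A) (f₁ : A₁ ⟶ Bb) (w₂ : A₂ ⟶ A) (f₂ : A₂ ⟶ Bb)
    (hw₁ : W w₁) (hw₂ : W w₂)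
    (p : E ⟶ A₁) (q : E ⟶ A₂) (hp : W p) (ς : p ≫ w₁ ≅ q ≫ w₂) :
    Equivalence (TripleRel W f₁ f₂ p q) := by
  constructor
  · intro T
    refine ⟨T.obj, 𝟙 T.obj, 𝟙 T.obj, Iso.refl _, hBF.bf1 _, ?_⟩
    simp [Bicategory.Strict.associator_eqToIso]
  · rintro T T' ⟨A₄, u, u', σ, hu, heq⟩
    have hW : W (u' ≫ T'.t) := hBF.bf5 _ _ (hBF.bf2 _ _ hu T.ht) ⟨σ⟩
    obtain ⟨A₅, s, hs⟩ := precomp_lemma hBF T'.t u' T'.ht hW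
    refine ⟨A₅, s ≫ u', s ≫ u, ?_, hs, ?_⟩
    · exact eqToIso (Category.assoc s u T.t) ≪≫ whiskerLeftIso s σ.symm ≪≫
        eqToIso (Category.assoc s u' T'.t).symm
    · have h2 := congrArg (fun η => s ◁ η) heq
      simp only [Bicategory.Strict.associator_eqToIso, eqToIso.hom, eqToIso.inv,
        Bicategory.whiskerLeft_eqToHom, Bicategory.eqToHom_whiskerRight, eqToHom_trans,
        eqToHom_trans_assoc, eqToHom_refl, Category.id_comp, Category.comp_id,
        Category.assoc, Bicategory.whiskerLeft_comp, Bicategory.comp_whiskerLeft,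
        Bicategory.comp_whiskerRight, Bicategory.whisker_assoc,
        Iso.trans_hom, Iso.trans_inv, Iso.symm_hom, Iso.symm_inv,
        Bicategory.whiskerLeftIso_hom, Bicategory.whiskerLeftIso_inv] at h2 ⊢
      have h3 : s ◁ σ.hom ▷ (p ≫ f₁) ≫
            eqToHom (by simp : s ≫ (u ≫ T.t) ≫ p ≫ f₁ = s ≫ u ≫ (T.t ≫ p) ≫ f₁) ≫
            s ◁ u ◁ T.φ ≫
            eqToHom (by simp : s ≫ u ≫ (T.t ≫ q) ≫ f₂ = s ≫ (u ≫ T.t) ≫ q ≫ f₂) ≫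
            s ◁ σ.inv ▷ (q ≫ f₂)
          = eqToHom (by simp : s ≫ (u' ≫ T'.t) ≫ p ≫ f₁ = s ≫ u' ≫ (T'.t ≫ p) ≫ f₁) ≫
            s ◁ u' ◁ T'.φ ≫
            eqToHom (by simp : s ≫ u' ≫ (T'.t ≫ q) ≫ f₂ = s ≫ (u' ≫ T'.t) ≫ q ≫ f₂) := h2
      have hΦ := congrArg (fun M =>
        eqToHom (by simp : s ≫ u' ≫ (T'.t ≫ p) ≫ f₁ = s ≫ (u' ≫ T'.t) ≫ p ≫ f₁) ≫ M ≫
        eqToHom (by simp : s ≫ (u' ≫ T'.t) ≫ q ≫ f₂ = s ≫ u' ≫ (T'.t ≫ q) ≫ f₂)) h3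
      simp only [eqToHom_trans, eqToHom_trans_assoc, eqToHom_refl, Category.id_comp,
        Category.comp_id, Category.assoc] at hΦ
      rw [← hΦ]
      have K1 : ∀ {Y : B} (x : E ⟶ Y) {Z : A₅ ⟶ Y}
          (R : s ≫ (u ≫ T.t) ≫ x ⟶ Z),
          s ◁ σ.inv ▷ x ≫ s ◁ σ.hom ▷ x ≫ R = R := by
        intro Y x Z R
        rw [← Bicategory.whiskerLeft_comp_assoc,
          Bicategory.inv_hom_whiskerRight, Bicategory.whiskerLeft_id, Category.id_comp]
      have K2 : ∀ {Y : B} (x : E ⟶ Y) {Z : A₅ ⟶ Y}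
          (R : s ≫ (u' ≫ T'.t) ≫ x ⟶ Z),
          s ◁ σ.hom ▷ x ≫ s ◁ σ.inv ▷ x ≫ R = R := by
        intro Y x Z R
        rw [← Bicategory.whiskerLeft_comp_assoc,
          Bicategory.hom_inv_whiskerRight, Bicategory.whiskerLeft_id, Category.id_comp]
      simp only [eqToHom_trans, eqToHom_trans_assoc, eqToHom_refl, Category.id_comp,
        Category.comp_id, Category.assoc, K1, K2]
  · rintro T T' T'' ⟨A₄, u, u', σ, hu, heq₁⟩ ⟨A₄', v, v', τ, hv, heq₂⟩
    obtain ⟨D, r, g, hr, ⟨ρ⟩⟩ := hBF.bf3 v u' hv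
    refine ⟨D, r ≫ u, g ≫ v', ?_, hBF.bf2 _ _ hr hu, ?_⟩
    · exact eqToIso (Category.assoc g v' T''.t) ≪≫ whiskerLeftIso g τ ≪≫
        eqToIso (Category.assoc g v T'.t).symm ≪≫ whiskerRightIso ρ.symm T'.t ≪≫
        eqToIso (Category.assoc r u' T'.t) ≪≫ whiskerLeftIso r σ ≪≫
        eqToIso (Category.assoc r u T.t).symm
    · have h1 := congrArg (fun η => r ◁ η) heq₁
      have h2 := congrArg (fun η => g ◁ η) heq₂
      have hex := Bicategory.whisker_exchange (f := r ≫ u') (g := g ≫ v) ρ.hom T'.φ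
      simp only [Bicategory.Strict.associator_eqToIso, eqToIso.hom, eqToIso.inv,
        Bicategory.whiskerLeft_eqToHom, Bicategory.eqToHom_whiskerRight, eqToHom_trans,
        eqToHom_trans_assoc, eqToHom_refl, Category.id_comp, Category.comp_id,
        Category.assoc, Bicategory.whiskerLeft_comp, Bicategory.comp_whiskerLeft,
        Bicategory.comp_whiskerRight, Bicategory.whisker_assoc, Bicategory.whiskerRight_comp,
        Iso.trans_hom, Iso.trans_inv, Iso.symm_hom, Iso.symm_inv,
        Bicategory.whiskerLeftIso_hom, Bicategory.whiskerLeftIso_inv,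
        Bicategory.whiskerRightIso_hom, Bicategory.whiskerRightIso_inv] at h1 h2 hex ⊢
      have S1 : r ◁ σ.hom ▷ p ▷ f₁ ≫
            eqToHom (by simp : r ≫ ((u ≫ T.t) ≫ p) ≫ f₁ = r ≫ u ≫ (T.t ≫ p) ≫ f₁) ≫
            r ◁ u ◁ T.φ ≫
            eqToHom (by simp : r ≫ u ≫ (T.t ≫ q) ≫ f₂ = r ≫ ((u ≫ T.t) ≫ q) ≫ f₂) ≫
            r ◁ σ.inv ▷ q ▷ f₂
          = eqToHom (by simp : r ≫ ((u' ≫ T'.t) ≫ p) ≫ f₁ = r ≫ u' ≫ (T'.t ≫ p) ≫ f₁) ≫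
            r ◁ u' ◁ T'.φ ≫
            eqToHom (by simp : r ≫ u' ≫ (T'.t ≫ q) ≫ f₂ = r ≫ ((u' ≫ T'.t) ≫ q) ≫ f₂) := by
        have hc := congrArg (fun M : (r ≫ (u' ≫ T'.t) ≫ p ≫ f₁ ⟶ r ≫ (u' ≫ T'.t) ≫ q ≫ f₂) =>
          eqToHom (by simp : r ≫ ((u' ≫ T'.t) ≫ p) ≫ f₁ = r ≫ (u' ≫ T'.t) ≫ p ≫ f₁) ≫ M ≫
          eqToHom (by simp : r ≫ (u' ≫ T'.t) ≫ q ≫ f₂ = r ≫ ((u' ≫ T'.t) ≫ q) ≫ f₂)) h1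
        simpa only [eqToHom_trans, eqToHom_trans_assoc, eqToHom_refl, Category.id_comp,
          Category.comp_id, Category.assoc] using hc
      have S1R : ∀ {Z : D ⟶ Bb} (R : r ≫ ((u' ≫ T'.t) ≫ q) ≫ f₂ ⟶ Z),
          r ◁ σ.hom ▷ p ▷ f₁ ≫
            eqToHom (by simp : r ≫ ((u ≫ T.t) ≫ p) ≫ f₁ = r ≫ u ≫ (T.t ≫ p) ≫ f₁) ≫
            r ◁ u ◁ T.φ ≫
            eqToHom (by simp : r ≫ u ≫ (T.t ≫ q) ≫ f₂ = r ≫ ((u ≫ T.t) ≫ q) ≫ f₂) ≫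
            r ◁ σ.inv ▷ q ▷ f₂ ≫ R
          = eqToHom (by simp : r ≫ ((u' ≫ T'.t) ≫ p) ≫ f₁ = r ≫ u' ≫ (T'.t ≫ p) ≫ f₁) ≫
            r ◁ u' ◁ T'.φ ≫
            eqToHom (by simp : r ≫ u' ≫ (T'.t ≫ q) ≫ f₂ = r ≫ ((u' ≫ T'.t) ≫ q) ≫ f₂) ≫ R :=
        fun R => by simpa only [Category.assoc] using congrArg (· ≫ R) S1
      have S2 : g ◁ τ.hom ▷ p ▷ f₁ ≫
            eqToHom (by simp : g ≫ ((v ≫ T'.t) ≫ p) ≫ f₁ = g ≫ v ≫ (T'.t ≫ p) ≫ f₁) ≫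
            g ◁ v ◁ T'.φ ≫
            eqToHom (by simp : g ≫ v ≫ (T'.t ≫ q) ≫ f₂ = g ≫ ((v ≫ T'.t) ≫ q) ≫ f₂) ≫
            g ◁ τ.inv ▷ q ▷ f₂
          = eqToHom (by simp : g ≫ ((v' ≫ T''.t) ≫ p) ≫ f₁ = g ≫ v' ≫ (T''.t ≫ p) ≫ f₁) ≫
            g ◁ v' ◁ T''.φ ≫
            eqToHom (by simp : g ≫ v' ≫ (T''.t ≫ q) ≫ f₂ = g ≫ ((v' ≫ T''.t) ≫ q) ≫ f₂) := by
        have hc := congrArg (fun M : (g ≫ (v' ≫ T''.t) ≫ p ≫ f₁ ⟶ g ≫ (v' ≫ T''.t) ≫ q ≫ f₂) =>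
          eqToHom (by simp : g ≫ ((v' ≫ T''.t) ≫ p) ≫ f₁ = g ≫ (v' ≫ T''.t) ≫ p ≫ f₁) ≫ M ≫
          eqToHom (by simp : g ≫ (v' ≫ T''.t) ≫ q ≫ f₂ = g ≫ ((v' ≫ T''.t) ≫ q) ≫ f₂)) h2
        simpa only [eqToHom_trans, eqToHom_trans_assoc, eqToHom_refl, Category.id_comp,
          Category.comp_id, Category.assoc] using hc
      have S2R : ∀ {Z : D ⟶ Bb} (R : g ≫ ((v' ≫ T''.t) ≫ q) ≫ f₂ ⟶ Z),
          g ◁ τ.hom ▷ p ▷ f₁ ≫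
            eqToHom (by simp : g ≫ ((v ≫ T'.t) ≫ p) ≫ f₁ = g ≫ v ≫ (T'.t ≫ p) ≫ f₁) ≫
            g ◁ v ◁ T'.φ ≫
            eqToHom (by simp : g ≫ v ≫ (T'.t ≫ q) ≫ f₂ = g ≫ ((v ≫ T'.t) ≫ q) ≫ f₂) ≫
            g ◁ τ.inv ▷ q ▷ f₂ ≫ R
          = eqToHom (by simp : g ≫ ((v' ≫ T''.t) ≫ p) ≫ f₁ = g ≫ v' ≫ (T''.t ≫ p) ≫ f₁) ≫
            g ◁ v' ◁ T''.φ ≫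
            eqToHom (by simp : g ≫ v' ≫ (T''.t ≫ q) ≫ f₂ = g ≫ ((v' ≫ T''.t) ≫ q) ≫ f₂) ≫ R :=
        fun R => by simpa only [Category.assoc] using congrArg (· ≫ R) S2
      have HexS : r ◁ u' ◁ T'.φ ≫
            eqToHom (by simp : r ≫ u' ≫ (T'.t ≫ q) ≫ f₂ = (((r ≫ u') ≫ T'.t) ≫ q) ≫ f₂) ≫
            ρ.hom ▷ T'.t ▷ q ▷ f₂
          = eqToHom (by simp :
              r ≫ u' ≫ (T'.t ≫ p) ≫ f₁ = (((r ≫ u') ≫ T'.t) ≫ p) ≫ f₁) ≫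
            ρ.hom ▷ T'.t ▷ p ▷ f₁ ≫
            eqToHom (by simp :
              (((g ≫ v) ≫ T'.t) ≫ p) ≫ f₁ = g ≫ v ≫ (T'.t ≫ p) ≫ f₁) ≫
            g ◁ v ◁ T'.φ ≫
            eqToHom (by simp :
              g ≫ v ≫ (T'.t ≫ q) ≫ f₂ = (((g ≫ v) ≫ T'.t) ≫ q) ≫ f₂) := by
        have hc := congrArg (fun M : ((r ≫ u') ≫ (T'.t ≫ p) ≫ f₁ ⟶ (g ≫ v) ≫ (T'.t ≫ q) ≫ f₂) =>
          eqToHom (by simp :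
            r ≫ u' ≫ (T'.t ≫ p) ≫ f₁ = (r ≫ u') ≫ (T'.t ≫ p) ≫ f₁) ≫ M ≫
          eqToHom (by simp :
            (g ≫ v) ≫ (T'.t ≫ q) ≫ f₂ = (((g ≫ v) ≫ T'.t) ≫ q) ≫ f₂)) hex
        simpa only [eqToHom_trans, eqToHom_trans_assoc, eqToHom_refl, Category.id_comp,
          Category.comp_id, Category.assoc] using hc
      have HexR : ∀ {Z : D ⟶ Bb} (R : (((g ≫ v) ≫ T'.t) ≫ q) ≫ f₂ ⟶ Z),
          r ◁ u' ◁ T'.φ ≫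
            eqToHom (by simp : r ≫ u' ≫ (T'.t ≫ q) ≫ f₂ = (((r ≫ u') ≫ T'.t) ≫ q) ≫ f₂) ≫
            ρ.hom ▷ T'.t ▷ q ▷ f₂ ≫ R
          = eqToHom (by simp :
              r ≫ u' ≫ (T'.t ≫ p) ≫ f₁ = (((r ≫ u') ≫ T'.t) ≫ p) ≫ f₁) ≫
            ρ.hom ▷ T'.t ▷ p ▷ f₁ ≫
            eqToHom (by simp :
              (((g ≫ v) ≫ T'.t) ≫ p) ≫ f₁ = g ≫ v ≫ (T'.t ≫ p) ≫ f₁) ≫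
            g ◁ v ◁ T'.φ ≫
            eqToHom (by simp :
              g ≫ v ≫ (T'.t ≫ q) ≫ f₂ = (((g ≫ v) ≫ T'.t) ≫ q) ≫ f₂) ≫ R :=
        fun R => by simpa only [Category.assoc] using congrArg (· ≫ R) HexS
      have KP : ∀ {Z : D ⟶ Bb} (R : (((g ≫ v) ≫ T'.t) ≫ p) ≫ f₁ ⟶ Z),
          ρ.inv ▷ T'.t ▷ p ▷ f₁ ≫ ρ.hom ▷ T'.t ▷ p ▷ f₁ ≫ R = R := fun R =>
        (Bicategory.whiskerRightIso (Bicategory.whiskerRightIso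
          (Bicategory.whiskerRightIso ρ T'.t) p) f₁).inv_hom_id_assoc R
      rw [S1R]
      simp only [eqToHom_trans, eqToHom_trans_assoc, eqToHom_refl, Category.id_comp,
        Category.comp_id, Category.assoc]
      rw [HexR]
      simp only [eqToHom_trans, eqToHom_trans_assoc, eqToHom_refl, Category.id_comp,
        Category.comp_id, Category.assoc, KP]
      rw [S2R]
      simp only [eqToHom_trans, eqToHom_trans_assoc, eqToHom_refl, Category.id_comp,
        Category.comp_id, Category.assoc]
end

section
/- Let C be a 2-category and W a class of 1-morphisms satisfying (BF1)–(BF5). Let f¹, f² : A → B be 1-morphisms of C and ρ, ρ' : f¹ ⇒ f² two 2-morphisms of C. Then the images under the universal pseudofunctor to the bicategory of fractions agree, i.e. [A, id_A, id_A, i_{id_A}, ρ] = [A, id_A, id_A, i_{id_A}, ρ'] as 2-morphisms of C[W⁻¹], if and only if there exist an object Ã and a morphism u : Ã → A in W with ρ ▷ u = ρ' ▷ u. (The universal pseudofunctor is '2-faithful modulo W'.) -/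
open CategoryTheory CategoryTheory.Bicategory

universe w v u


variable {B : Type u} [Bicategory.{w, v} B]

/-- the universal pseudofunctor is 2-faithful modulo `W`: the images of
`ρ, ρ' : f₁ ⟶ f₂` in the bicategory of fractions agree iff `ρ` and `ρ'` become equal after
precomposition with some `u ∈ W`. -/
theorem statement13 {B : Type u} [Bicategory.{w, v} B] [Bicategory.Strict B]
    (W : ∀ ⦃X Y : B⦄, (X ⟶ Y) → Prop) (hBF : PronkBF W)
    {A Bb : B} (f₁ f₂ : A ⟶ Bb) (ρ ρ' : f₁ ⟶ f₂) :
    PronkRel W (𝟙 A) f₁ (𝟙 A) f₂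
        ⟨A, 𝟙 A, 𝟙 A, 𝟙 (𝟙 A ≫ 𝟙 A), 𝟙 A ◁ ρ⟩
        ⟨A, 𝟙 A, 𝟙 A, 𝟙 (𝟙 A ≫ 𝟙 A), 𝟙 A ◁ ρ'⟩ ↔
      ∃ (A' : B) (u : A' ⟶ A), W u ∧ u ◁ ρ = u ◁ ρ' := by
  constructor
  · rintro ⟨A₄, z, z', σ₁, σ₂, hW, h1, h2⟩
    simp only at z z' σ₁ σ₂ hW h1 h2
    set τ : z' ⟶ z := eqToHom (Bicategory.Strict.comp_id z').symm ≫ σ₁.hom ≫ eqToHom (Bicategory.Strict.comp_id z) with hτ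
    set υ : z ⟶ z' := eqToHom (Bicategory.Strict.comp_id z).symm ≫ σ₂.hom ≫ eqToHom (Bicategory.Strict.comp_id z') with hυ
    have hσ₁ : σ₁.hom = eqToHom (Bicategory.Strict.comp_id z') ≫ τ ≫ eqToHom (Bicategory.Strict.comp_id z).symm := by
      simp [hτ]
    have hσ₂ : σ₂.hom = eqToHom (Bicategory.Strict.comp_id z) ≫ υ ≫ eqToHom (Bicategory.Strict.comp_id z').symm := by
      simp [hυ]
    rw [hσ₁, hσ₂] at h1 h2
    simp only [Bicategory.Strict.associator_eqToIso, Bicategory.Strict.rightUnitor_eqToIso,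
      Bicategory.Strict.leftUnitor_eqToIso, Bicategory.whiskerRight_id,
      Bicategory.id_whiskerLeft, eqToIso.hom, eqToIso.inv, Bicategory.whiskerLeft_id,
      Bicategory.comp_whiskerRight, Bicategory.eqToHom_whiskerRight,
      Bicategory.whiskerLeft_eqToHom, Bicategory.whiskerLeft_comp,
      eqToHom_trans, eqToHom_trans_assoc, eqToHom_refl, Category.id_comp, Category.comp_id,
      Category.assoc] at h1 h2 hW
    simp only [eqToHom_comp_iff] at h1 h2
    simp only [← Category.assoc, comp_eqToHom_iff] at h1 h2
    simp only [eqToHom_trans, eqToHom_trans_assoc, eqToHom_refl,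
      Category.id_comp, Category.comp_id, Category.assoc] at h1 h2
    -- h1 : τ ≫ υ = 𝟙 z', h2 : τ ▷ f₁ ≫ z ◁ ρ ≫ υ ▷ f₂ = z' ◁ ρ'
    refine ⟨A₄, z', hBF.bf5 z' z hW ⟨eqToIso (Bicategory.Strict.comp_id z').symm ≪≫ σ₁ ≪≫ eqToIso (Bicategory.Strict.comp_id z)⟩, ?_⟩
    have hx : z' ◁ ρ ≫ τ ▷ f₂ = τ ▷ f₁ ≫ z ◁ ρ := Bicategory.whisker_exchange τ ρ
    calc z' ◁ ρ = z' ◁ ρ ≫ (τ ≫ υ) ▷ f₂ := by rw [h1]; simp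
      _ = (z' ◁ ρ ≫ τ ▷ f₂) ≫ υ ▷ f₂ := by
          rw [Bicategory.comp_whiskerRight, Category.assoc]
      _ = τ ▷ f₁ ≫ z ◁ ρ ≫ υ ▷ f₂ := by rw [hx, Category.assoc]
      _ = z' ◁ ρ' := h2
  · rintro ⟨A', u, hu, h⟩
    refine ⟨A', u, u, Iso.refl _, Iso.refl _, ?_, ?_, ?_⟩
    · simpa using hu
    · simp
    · simp [h]
end

section
/- Let C be a 2-category and W a class of 1-morphisms satisfying (BF1)–(BF5). Given composable 1-morphisms and 2-cells of the bicategory of fractions: Γ¹ = [A⁴, u¹, u², α¹, β¹] : (A¹, w¹, f¹) ⇒ (A², w², f²) and Γ² = [A⁵, u³, u⁴, α², β²] : (A², w², f²) ⇒ (A³, w³, f³), and ANY two choices of data (C, t¹ ∈ W, t² , ρ : u² ∘ t¹ ⇒ u³ ∘ t² invertible) and (D, p¹ ∈ W, p², μ : u² ∘ p¹ ⇒ u³ ∘ p² invertible) as in axiom-derived completions, the two resulting quintuples [C, u¹ ∘ t¹, u⁴ ∘ t², (α² ▷ t²) • (w² ◁ ρ) • (α¹ ▷ t¹), (β² ▷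 t²) • (f² ◁ ρ) • (β¹ ▷ t¹)] and [D, u¹ ∘ p¹, u⁴ ∘ p², (α² ▷ p²) • (w² ◁ μ) • (α¹ ▷ p¹), (β² ▷ p²) • (f² ◁ μ) • (β¹ ▷ p¹)] are equivalent, i.e. they represent the same 2-morphism of the bicategory of fractions. Hence vertical composition in C[W⁻¹] is independent of all auxiliary choices. -/
open CategoryTheory CategoryTheory.Bicategory

universe w v u


variable {B : Type u} [Bicategory.{w, v} B]

/-- Proposition prop-02: vertical composition in the bicategory of
fractions is independent of all auxiliary choices: any two admissible choices of completion
data produce Pronk-equivalent composite quintuples. -/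
theorem statement14 {B : Type u} [Bicategory.{w, v} B] [Bicategory.Strict B]
    (W : ∀ ⦃X Y : B⦄, (X ⟶ Y) → Prop) (hBF : PronkBF W)
    {A Bb A₁ A₂ A₃ A₄ A₅ C D : B}
    (w₁ : A₁ ⟶ A) (f₁ : A₁ ⟶ Bb) (w₂ : A₂ ⟶ A) (f₂ : A₂ ⟶ Bb)
    (w₃ : A₃ ⟶ A) (f₃ : A₃ ⟶ Bb)
    (hw₁ : W w₁) (hw₂ : W w₂) (hw₃ : W w₃)
    (u₁ : A₄ ⟶ A₁) (u₂ : A₄ ⟶ A₂)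
    (α₁ : u₁ ≫ w₁ ⟶ u₂ ≫ w₂) (β₁ : u₁ ≫ f₁ ⟶ u₂ ≫ f₂)
    (hu₁ : W (u₁ ≫ w₁)) (hα₁ : IsIso α₁)
    (u₃ : A₅ ⟶ A₂) (u₄ : A₅ ⟶ A₃)
    (α₂ : u₃ ≫ w₂ ⟶ u₄ ≫ w₃) (β₂ : u₃ ≫ f₂ ⟶ u₄ ≫ f₃)
    (hu₃ : W (u₃ ≫ w₂)) (hα₂ : IsIso α₂)
    (t₁ : C ⟶ A₄) (t₂ : C ⟶ A₅) (ht₁ : W t₁) (ρ : t₁ ≫ u₂ ≅ t₂ ≫ u₃)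
    (p₁ : D ⟶ A₄) (p₂ : D ⟶ A₅) (hp₁ : W p₁) (μ : p₁ ≫ u₂ ≅ p₂ ≫ u₃) :
    PronkRel W w₁ f₁ w₃ f₃
      ⟨C, t₁ ≫ u₁, t₂ ≫ u₄,
        (α_ t₁ u₁ w₁).hom ≫ t₁ ◁ α₁ ≫ (α_ t₁ u₂ w₂).inv ≫ ρ.hom ▷ w₂ ≫
          (α_ t₂ u₃ w₂).hom ≫ t₂ ◁ α₂ ≫ (α_ t₂ u₄ w₃).inv,
        (α_ t₁ u₁ f₁).hom ≫ t₁ ◁ β₁ ≫ (α_ t₁ u₂ f₂).inv ≫ ρ.hom ▷ f₂ ≫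
          (α_ t₂ u₃ f₂).hom ≫ t₂ ◁ β₂ ≫ (α_ t₂ u₄ f₃).inv⟩
      ⟨D, p₁ ≫ u₁, p₂ ≫ u₄,
        (α_ p₁ u₁ w₁).hom ≫ p₁ ◁ α₁ ≫ (α_ p₁ u₂ w₂).inv ≫ μ.hom ▷ w₂ ≫
          (α_ p₂ u₃ w₂).hom ≫ p₂ ◁ α₂ ≫ (α_ p₂ u₄ w₃).inv,
        (α_ p₁ u₁ f₁).hom ≫ p₁ ◁ β₁ ≫ (α_ p₁ u₂ f₂).inv ≫ μ.hom ▷ f₂ ≫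
          (α_ p₂ u₃ f₂).hom ≫ p₂ ◁ β₂ ≫ (α_ p₂ u₄ f₃).inv⟩ := by
  -- Step 1: complete the cospan (t₁, p₁) using (BF3).
  obtain ⟨E₀, q₁, q₂, hq₁, ⟨κ⟩⟩ := hBF.bf3 p₁ t₁ hp₁
  -- Step 2: the comparison 2-isomorphism between the two second legs, over `u₃`.
  obtain ⟨φ, hφ⟩ : ∃ φ : (q₁ ≫ t₂) ≫ u₃ ≅ (q₂ ≫ p₂) ≫ u₃,
      φ.hom = (α_ q₁ t₂ u₃).hom ≫ q₁ ◁ ρ.inv ≫ (α_ q₁ t₁ u₂).inv ≫ κ.hom ▷ u₂ ≫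
        (α_ q₂ p₁ u₂).hom ≫ q₂ ◁ μ.hom ≫ (α_ q₂ p₂ u₃).inv :=
    ⟨α_ q₁ t₂ u₃ ≪≫ whiskerLeftIso q₁ ρ.symm ≪≫ (α_ q₁ t₁ u₂).symm ≪≫
      whiskerRightIso κ u₂ ≪≫ α_ q₂ p₁ u₂ ≪≫ whiskerLeftIso q₂ μ ≪≫ (α_ q₂ p₂ u₃).symm,
      by simp only [Iso.trans_hom, Iso.symm_hom, whiskerLeftIso_hom, whiskerRightIso_hom,
        Category.assoc]⟩
  -- Step 3: (BF4b) applied to `u₃ ≫ w₂ ∈ W`.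
  obtain ⟨E₁, r, ψ, hr, hψiso, hψ⟩ := hBF.bf4b (u₃ ≫ w₂) (q₁ ≫ t₂) (q₂ ≫ p₂)
    ((α_ (q₁ ≫ t₂) u₃ w₂).inv ≫ φ.hom ▷ w₂ ≫ (α_ (q₂ ≫ p₂) u₃ w₂).hom) hu₃ inferInstance
  obtain ⟨θ₁, hθ₁⟩ : ∃ θ : (r ≫ (q₁ ≫ t₂)) ≫ u₃ ⟶ (r ≫ (q₂ ≫ p₂)) ≫ u₃,
      θ = (α_ r (q₁ ≫ t₂) u₃).hom ≫ r ◁ φ.hom ≫ (α_ r (q₂ ≫ p₂) u₃).inv := ⟨_, rfl⟩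
  have hθ : θ₁ ▷ w₂ =
      (α_ (r ≫ (q₁ ≫ t₂)) u₃ w₂).hom ≫ ψ ▷ (u₃ ≫ w₂) ≫ (α_ (r ≫ (q₂ ≫ p₂)) u₃ w₂).inv := by
    calc θ₁ ▷ w₂
        = 𝟙 _ ⊗≫ r ◁ ((α_ (q₁ ≫ t₂) u₃ w₂).inv ≫ φ.hom ▷ w₂ ≫ (α_ (q₂ ≫ p₂) u₃ w₂).hom)
            ⊗≫ 𝟙 _ := by
          rw [hθ₁]; bicategory
      _ = 𝟙 _ ⊗≫ ((α_ r (q₁ ≫ t₂) (u₃ ≫ w₂)).inv ≫ ψ ▷ (u₃ ≫ w₂) ≫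
            (α_ r (q₂ ≫ p₂) (u₃ ≫ w₂)).hom) ⊗≫ 𝟙 _ := by rw [hψ]
      _ = _ := by bicategory
  -- Step 4: (BF4c) to compare `r ◁ φ` and `ψ ▷ u₃` over `w₂ ∈ W`.
  obtain ⟨E₂, s₁, s₂, ζ, hWs, hζ⟩ := hBF.bf4c w₂ ((r ≫ (q₁ ≫ t₂)) ≫ u₃)
    ((r ≫ (q₂ ≫ p₂)) ≫ u₃) (θ₁ ▷ w₂)
    (𝟙 E₁) ((λ_ _).hom ≫ θ₁ ≫ (λ_ _).inv)
    (𝟙 E₁) ((λ_ _).hom ≫ ψ ▷ u₃ ≫ (λ_ _).inv)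
    hw₂ (hBF.bf1 E₁) (hBF.bf1 E₁)
    (by rw [hθ₁]; bicategory)
    (by rw [hθ]; bicategory)
  obtain ⟨ξ, hξ⟩ : ∃ ξ : s₁ ≅ s₂, ζ.hom = (ρ_ s₁).hom ≫ ξ.hom ≫ (ρ_ s₂).inv :=
    ⟨(ρ_ s₁).symm ≪≫ ζ ≪≫ ρ_ s₂, by simp⟩
  -- Master relation.
  have M : ξ.hom ▷ ((r ≫ (q₁ ≫ t₂)) ≫ u₃) ≫ s₂ ◁ (ψ ▷ u₃) =
      s₁ ◁ θ₁ ≫ ξ.hom ▷ ((r ≫ (q₂ ≫ p₂)) ≫ u₃) := by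
    calc ξ.hom ▷ ((r ≫ (q₁ ≫ t₂)) ≫ u₃) ≫ s₂ ◁ (ψ ▷ u₃)
        = 𝟙 _ ⊗≫ (ζ.hom ▷ ((r ≫ (q₁ ≫ t₂)) ≫ u₃) ≫
            (α_ s₂ (𝟙 E₁) ((r ≫ (q₁ ≫ t₂)) ≫ u₃)).hom ≫
            s₂ ◁ ((λ_ ((r ≫ (q₁ ≫ t₂)) ≫ u₃)).hom ≫ ψ ▷ u₃ ≫ (λ_ ((r ≫ (q₂ ≫ p₂)) ≫ u₃)).inv) ≫
            (α_ s₂ (𝟙 E₁) ((r ≫ (q₂ ≫ p₂)) ≫ u₃)).inv) ⊗≫ 𝟙 _ := by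
          rw [hξ]; bicategory
      _ = 𝟙 _ ⊗≫ ((α_ s₁ (𝟙 E₁) ((r ≫ (q₁ ≫ t₂)) ≫ u₃)).hom ≫
            s₁ ◁ ((λ_ ((r ≫ (q₁ ≫ t₂)) ≫ u₃)).hom ≫ θ₁ ≫ (λ_ ((r ≫ (q₂ ≫ p₂)) ≫ u₃)).inv) ≫
            (α_ s₁ (𝟙 E₁) ((r ≫ (q₂ ≫ p₂)) ≫ u₃)).inv ≫
            ζ.hom ▷ ((r ≫ (q₂ ≫ p₂)) ≫ u₃)) ⊗≫ 𝟙 _ := by rw [hζ]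
      _ = _ := by rw [hξ]; bicategory
  -- The common refinement data.
  let Φ : (s₂ ≫ r) ≫ (q₂ ≫ p₁) ≅ (s₁ ≫ r) ≫ (q₁ ≫ t₁) :=
    whiskerRightIso (whiskerRightIso ξ.symm r) (q₂ ≫ p₁) ≪≫ whiskerLeftIso (s₁ ≫ r) κ.symm
  let σ₁ : ((s₂ ≫ r) ≫ q₂) ≫ (p₁ ≫ u₁) ≅ ((s₁ ≫ r) ≫ q₁) ≫ (t₁ ≫ u₁) :=
    α_ (s₂ ≫ r) q₂ (p₁ ≫ u₁) ≪≫ whiskerLeftIso (s₂ ≫ r) (α_ q₂ p₁ u₁).symm ≪≫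
      (α_ (s₂ ≫ r) (q₂ ≫ p₁) u₁).symm ≪≫ whiskerRightIso Φ u₁ ≪≫
      α_ (s₁ ≫ r) (q₁ ≫ t₁) u₁ ≪≫ whiskerLeftIso (s₁ ≫ r) (α_ q₁ t₁ u₁) ≪≫
      (α_ (s₁ ≫ r) q₁ (t₁ ≫ u₁)).symm
  let Ψ : s₁ ≫ (r ≫ (q₁ ≫ t₂)) ≅ s₂ ≫ (r ≫ (q₂ ≫ p₂)) :=
    whiskerRightIso ξ (r ≫ (q₁ ≫ t₂)) ≪≫ whiskerLeftIso s₂ (asIso ψ)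
  let σ₂ : ((s₁ ≫ r) ≫ q₁) ≫ (t₂ ≫ u₄) ≅ ((s₂ ≫ r) ≫ q₂) ≫ (p₂ ≫ u₄) :=
    α_ (s₁ ≫ r) q₁ (t₂ ≫ u₄) ≪≫ whiskerLeftIso (s₁ ≫ r) (α_ q₁ t₂ u₄).symm ≪≫
      (α_ (s₁ ≫ r) (q₁ ≫ t₂) u₄).symm ≪≫ whiskerRightIso (α_ s₁ r (q₁ ≫ t₂)) u₄ ≪≫
      whiskerRightIso Ψ u₄ ≪≫ whiskerRightIso (α_ s₂ r (q₂ ≫ p₂)).symm u₄ ≪≫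
      α_ (s₂ ≫ r) (q₂ ≫ p₂) u₄ ≪≫ whiskerLeftIso (s₂ ≫ r) (α_ q₂ p₂ u₄) ≪≫
      (α_ (s₂ ≫ r) q₂ (p₂ ≫ u₄)).symm
  have hs₁ : W s₁ := by simpa using hWs
  have hW : W ((((s₁ ≫ r) ≫ q₁) ≫ (t₁ ≫ u₁)) ≫ w₁) := by
    have : W (s₁ ≫ (r ≫ (q₁ ≫ (t₁ ≫ (u₁ ≫ w₁))))) :=
      hBF.bf2 _ _ hs₁ (hBF.bf2 _ _ hr (hBF.bf2 _ _ hq₁ (hBF.bf2 _ _ ht₁ hu₁)))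
    simpa only [Category.assoc] using this
  have key : ∀ {X : B} (x₁ : A₁ ⟶ X) (x₂ : A₂ ⟶ X) (x₃ : A₃ ⟶ X)
      (γ₁ : u₁ ≫ x₁ ⟶ u₂ ≫ x₂) (γ₂ : u₃ ≫ x₂ ⟶ u₄ ≫ x₃),
      σ₁.hom ▷ x₁ ≫ (α_ ((s₁ ≫ r) ≫ q₁) (t₁ ≫ u₁) x₁).hom ≫
        ((s₁ ≫ r) ≫ q₁) ◁ ((α_ t₁ u₁ x₁).hom ≫ t₁ ◁ γ₁ ≫ (α_ t₁ u₂ x₂).inv ≫ ρ.hom ▷ x₂ ≫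
          (α_ t₂ u₃ x₂).hom ≫ t₂ ◁ γ₂ ≫ (α_ t₂ u₄ x₃).inv) ≫
        (α_ ((s₁ ≫ r) ≫ q₁) (t₂ ≫ u₄) x₃).inv ≫ σ₂.hom ▷ x₃ =
      (α_ ((s₂ ≫ r) ≫ q₂) (p₁ ≫ u₁) x₁).hom ≫
        ((s₂ ≫ r) ≫ q₂) ◁ ((α_ p₁ u₁ x₁).hom ≫ p₁ ◁ γ₁ ≫ (α_ p₁ u₂ x₂).inv ≫ μ.hom ▷ x₂ ≫
          (α_ p₂ u₃ x₂).hom ≫ p₂ ◁ γ₂ ≫ (α_ p₂ u₄ x₃).inv) ≫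
        (α_ ((s₂ ≫ r) ≫ q₂) (p₂ ≫ u₄) x₃).inv := by
    intro X x₁ x₂ x₃ γ₁ γ₂
    simp only [σ₁, σ₂, Φ, Ψ, Iso.trans_hom, Iso.symm_hom, whiskerLeftIso_hom,
      whiskerRightIso_hom, asIso_hom, Category.assoc]
    calc _
        = 𝟙 _ ⊗≫ ξ.inv ▷ (r ≫ (q₂ ≫ (p₁ ≫ (u₁ ≫ x₁)))) ⊗≫
            s₁ ◁ (r ◁ (κ.inv ▷ (u₁ ≫ x₁))) ⊗≫
            s₁ ◁ (r ◁ (q₁ ◁ (t₁ ◁ γ₁))) ⊗≫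
            s₁ ◁ (r ◁ (q₁ ◁ (ρ.hom ▷ x₂))) ⊗≫
            (s₁ ◁ (r ◁ (q₁ ◁ (t₂ ◁ γ₂))) ≫ ξ.hom ▷ (r ≫ (q₁ ≫ (t₂ ≫ (u₄ ≫ x₃))))) ⊗≫
            s₂ ◁ (ψ ▷ (u₄ ≫ x₃)) ⊗≫ 𝟙 _ := by
          bicategory
      _ = 𝟙 _ ⊗≫ ξ.inv ▷ (r ≫ (q₂ ≫ (p₁ ≫ (u₁ ≫ x₁)))) ⊗≫
            s₁ ◁ (r ◁ (κ.inv ▷ (u₁ ≫ x₁))) ⊗≫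
            s₁ ◁ (r ◁ (q₁ ◁ (t₁ ◁ γ₁))) ⊗≫
            s₁ ◁ (r ◁ (q₁ ◁ (ρ.hom ▷ x₂))) ⊗≫
            ξ.hom ▷ (r ≫ (q₁ ≫ (t₂ ≫ (u₃ ≫ x₂)))) ⊗≫
            s₂ ◁ ((r ≫ (q₁ ≫ t₂)) ◁ γ₂ ≫ ψ ▷ (u₄ ≫ x₃)) ⊗≫ 𝟙 _ := by
          rw [whisker_exchange ξ.hom (r ◁ (q₁ ◁ (t₂ ◁ γ₂)))]; bicategory
      _ = 𝟙 _ ⊗≫ ξ.inv ▷ (r ≫ (q₂ ≫ (p₁ ≫ (u₁ ≫ x₁)))) ⊗≫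
            s₁ ◁ (r ◁ (κ.inv ▷ (u₁ ≫ x₁))) ⊗≫
            s₁ ◁ (r ◁ (q₁ ◁ (t₁ ◁ γ₁))) ⊗≫
            s₁ ◁ (r ◁ (q₁ ◁ (ρ.hom ▷ x₂))) ⊗≫
            (ξ.hom ▷ ((r ≫ (q₁ ≫ t₂)) ≫ u₃) ≫ s₂ ◁ (ψ ▷ u₃)) ▷ x₂ ⊗≫
            s₂ ◁ ((r ≫ (q₂ ≫ p₂)) ◁ γ₂) ⊗≫ 𝟙 _ := by
          rw [whisker_exchange ψ γ₂]; bicategory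
      _ = 𝟙 _ ⊗≫ ξ.inv ▷ (r ≫ (q₂ ≫ (p₁ ≫ (u₁ ≫ x₁)))) ⊗≫
            s₁ ◁ (r ◁ (κ.inv ▷ (u₁ ≫ x₁))) ⊗≫
            s₁ ◁ (r ◁ (q₁ ◁ (t₁ ◁ γ₁))) ⊗≫
            s₁ ◁ (r ◁ (q₁ ◁ ((ρ.hom ≫ ρ.inv) ▷ x₂))) ⊗≫
            s₁ ◁ (r ◁ (κ.hom ▷ (u₂ ≫ x₂))) ⊗≫
            s₁ ◁ (r ◁ (q₂ ◁ (μ.hom ▷ x₂))) ⊗≫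
            ξ.hom ▷ (r ≫ (q₂ ≫ (p₂ ≫ (u₃ ≫ x₂)))) ⊗≫
            s₂ ◁ ((r ≫ (q₂ ≫ p₂)) ◁ γ₂) ⊗≫ 𝟙 _ := by
          rw [M, hθ₁, hφ]; bicategory
      _ = 𝟙 _ ⊗≫ ξ.inv ▷ (r ≫ (q₂ ≫ (p₁ ≫ (u₁ ≫ x₁)))) ⊗≫
            s₁ ◁ (r ◁ (κ.inv ▷ (u₁ ≫ x₁))) ⊗≫
            s₁ ◁ (r ◁ ((q₁ ≫ t₁) ◁ γ₁ ≫ κ.hom ▷ (u₂ ≫ x₂))) ⊗≫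
            s₁ ◁ (r ◁ (q₂ ◁ (μ.hom ▷ x₂))) ⊗≫
            ξ.hom ▷ (r ≫ (q₂ ≫ (p₂ ≫ (u₃ ≫ x₂)))) ⊗≫
            s₂ ◁ ((r ≫ (q₂ ≫ p₂)) ◁ γ₂) ⊗≫ 𝟙 _ := by
          rw [Iso.hom_inv_id]; bicategory
      _ = 𝟙 _ ⊗≫ ξ.inv ▷ (r ≫ (q₂ ≫ (p₁ ≫ (u₁ ≫ x₁)))) ⊗≫
            s₁ ◁ (r ◁ ((κ.inv ≫ κ.hom) ▷ (u₁ ≫ x₁))) ⊗≫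
            (s₁ ◁ (r ◁ (q₂ ◁ (p₁ ◁ γ₁ ≫ (α_ p₁ u₂ x₂).inv ≫ μ.hom ▷ x₂ ≫ (α_ p₂ u₃ x₂).hom))) ≫
              ξ.hom ▷ (r ≫ (q₂ ≫ (p₂ ≫ (u₃ ≫ x₂))))) ⊗≫
            s₂ ◁ ((r ≫ (q₂ ≫ p₂)) ◁ γ₂) ⊗≫ 𝟙 _ := by
          rw [whisker_exchange κ.hom γ₁]; bicategory
      _ = 𝟙 _ ⊗≫ (ξ.inv ≫ ξ.hom) ▷ (r ≫ (q₂ ≫ (p₁ ≫ (u₁ ≫ x₁)))) ⊗≫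
            s₂ ◁ (r ◁ (q₂ ◁ (p₁ ◁ γ₁ ≫ (α_ p₁ u₂ x₂).inv ≫ μ.hom ▷ x₂ ≫ (α_ p₂ u₃ x₂).hom))) ⊗≫
            s₂ ◁ ((r ≫ (q₂ ≫ p₂)) ◁ γ₂) ⊗≫ 𝟙 _ := by
          rw [Iso.inv_hom_id,
            whisker_exchange ξ.hom
              (r ◁ (q₂ ◁ (p₁ ◁ γ₁ ≫ (α_ p₁ u₂ x₂).inv ≫ μ.hom ▷ x₂ ≫ (α_ p₂ u₃ x₂).hom)))]
          bicategory
      _ = _ := by rw [Iso.inv_hom_id]; bicategory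
  exact ⟨E₂, (s₁ ≫ r) ≫ q₁, (s₂ ≫ r) ≫ q₂, σ₁, σ₂, hW,
    key w₁ w₂ w₃ α₁ α₂, key f₁ f₂ f₃ β₁ β₂⟩
end

section
/- Let C be a 2-category and W a class of 1-morphisms satisfying (BF1)–(BF5). Then Pronk's relation on quintuples representing 2-morphisms of the bicategory of fractions is an equivalence relation. Explicitly, fix (A^m, w^m, f^m) : A → B for m = 1,2 with w^m ∈ W; on the collection of quintuples (A³, v¹ : A³ → A¹, v² : A³ → A², α : w¹ ∘ v¹ ⇒ w² ∘ v² invertible, β : f¹ ∘ v¹ ⇒ f² ∘ v²) with w¹ ∘ v¹ ∈ W, the relation '(A³, v¹, v², α, β) ≈ (A'³, v'¹, v'², α', β') iff there exist A⁴, z : A⁴ → A³, z' : A⁴ → A'³ and invertible σ¹ : v'¹ ∘ z' ⇒ v¹ ∘ z, σ² : v² ∘ z ⇒ v'² ∘ z' with w¹ ∘ v¹ ∘ z ∈ W and the two pasting equalities (over A with α, α', over B with β, β') hold' is reflexive, symmetric and transitive. -/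
open CategoryTheory CategoryTheory.Bicategory

universe w v u


variable {B : Type u} [Bicategory.{w, v} B]

section PronkAux
variable {B : Type u} [Bicategory.{w, v} B] [Bicategory.Strict B]

def Paste {N N' M₁ M₂ T : B} (g : M₁ ⟶ T) (h : M₂ ⟶ T)
    {x : N ⟶ M₁} {y : N ⟶ M₂} {x' : N' ⟶ M₁} {y' : N' ⟶ M₂}
    (γ : x ≫ g ⟶ y ≫ h) (γ' : x' ≫ g ⟶ y' ≫ h)
    {C : B} (z : C ⟶ N) (z' : C ⟶ N')
    (σ₁ : z' ≫ x' ≅ z ≫ x) (σ₂ : z ≫ y ≅ z' ≫ y') : Prop :=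
  σ₁.hom ▷ g ≫ (α_ z x g).hom ≫ z ◁ γ ≫ (α_ z y h).inv ≫ σ₂.hom ▷ h
    = (α_ z' x' g).hom ≫ z' ◁ γ' ≫ (α_ z' y' h).inv

lemma paste_refl {N M₁ M₂ T : B} (g : M₁ ⟶ T) (h : M₂ ⟶ T)
    {x : N ⟶ M₁} {y : N ⟶ M₂} (γ : x ≫ g ⟶ y ≫ h) :
    Paste g h γ γ (𝟙 N) (𝟙 N) (Iso.refl _) (Iso.refl _) := by
  simp [Paste]

lemma paste_symm {N N' M₁ M₂ T : B} {g : M₁ ⟶ T} {h : M₂ ⟶ T}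
    {x : N ⟶ M₁} {y : N ⟶ M₂} {x' : N' ⟶ M₁} {y' : N' ⟶ M₂}
    {γ : x ≫ g ⟶ y ≫ h} {γ' : x' ≫ g ⟶ y' ≫ h}
    {C : B} {z : C ⟶ N} {z' : C ⟶ N'}
    {σ₁ : z' ≫ x' ≅ z ≫ x} {σ₂ : z ≫ y ≅ z' ≫ y'}
    (H : Paste g h γ γ' z z' σ₁ σ₂) :
    Paste g h γ' γ z' z σ₁.symm σ₂.symm := by
  have H' := reassoc_of% H
  unfold Paste at H' ⊢
  rw [Iso.symm_hom, Iso.symm_hom, ← H']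
  simp

lemma paste_trans {N₁ N₂ N₃ M₁ M₂ T : B} {g : M₁ ⟶ T} {h : M₂ ⟶ T}
    {x₁ : N₁ ⟶ M₁} {y₁ : N₁ ⟶ M₂} {x₂ : N₂ ⟶ M₁} {y₂ : N₂ ⟶ M₂}
    {x₃ : N₃ ⟶ M₁} {y₃ : N₃ ⟶ M₂}
    {γ₁ : x₁ ≫ g ⟶ y₁ ≫ h} {γ₂ : x₂ ≫ g ⟶ y₂ ≫ h} {γ₃ : x₃ ≫ g ⟶ y₃ ≫ h}
    {C₁ C₂ D E : B} {z₁ : C₁ ⟶ N₁} {z₁' : C₁ ⟶ N₂} {z₂ : C₂ ⟶ N₂} {z₂' : C₂ ⟶ N₃}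
    {σ₁ : z₁' ≫ x₂ ≅ z₁ ≫ x₁} {σ₂ : z₁ ≫ y₁ ≅ z₁' ≫ y₂}
    {τ₁ : z₂' ≫ x₃ ≅ z₂ ≫ x₂} {τ₂ : z₂ ≫ y₂ ≅ z₂' ≫ y₃}
    (p : D ⟶ C₁) (q : D ⟶ C₂) (r : E ⟶ D) (Ψ : r ≫ (p ≫ z₁') ≅ r ≫ (q ≫ z₂))
    (H₁ : Paste g h γ₁ γ₂ z₁ z₁' σ₁ σ₂) (H₂ : Paste g h γ₂ γ₃ z₂ z₂' τ₁ τ₂) :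
    Paste g h γ₁ γ₃ ((r ≫ p) ≫ z₁) ((r ≫ q) ≫ z₂')
      (eqToIso (by simp) ≪≫ whiskerLeftIso (r ≫ q) τ₁ ≪≫ eqToIso (by simp)
        ≪≫ whiskerRightIso Ψ.symm x₂ ≪≫ eqToIso (by simp)
        ≪≫ whiskerLeftIso (r ≫ p) σ₁ ≪≫ eqToIso (by simp))
      (eqToIso (by simp) ≪≫ whiskerLeftIso (r ≫ p) σ₂ ≪≫ eqToIso (by simp)
        ≪≫ whiskerRightIso Ψ y₂ ≪≫ eqToIso (by simp)
        ≪≫ whiskerLeftIso (r ≫ q) τ₂ ≪≫ eqToIso (by simp)) := by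
  unfold Paste at H₁ H₂ ⊢
  have h1 : z₁ ◁ γ₁ = (α_ z₁ x₁ g).inv ≫ σ₁.inv ▷ g ≫
      ((α_ z₁' x₂ g).hom ≫ z₁' ◁ γ₂ ≫ (α_ z₁' y₂ h).inv) ≫ σ₂.inv ▷ h ≫ (α_ z₁ y₁ h).hom := by
    rw [← H₁]; simp
  have h2 : z₂ ◁ γ₂ = (α_ z₂ x₂ g).inv ≫ τ₁.inv ▷ g ≫
      ((α_ z₂' x₃ g).hom ≫ z₂' ◁ γ₃ ≫ (α_ z₂' y₃ h).inv) ≫ τ₂.inv ▷ h ≫ (α_ z₂ y₂ h).hom := by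
    rw [← H₂]; simp
  have e := whisker_exchange (η := Ψ.hom) (θ := γ₂)
  have ex : (r ≫ p ≫ z₁') ◁ γ₂
      = Ψ.hom ▷ (x₂ ≫ g) ≫ (r ≫ q ≫ z₂) ◁ γ₂ ≫ Ψ.inv ▷ (y₂ ≫ h) := by
    have e' := reassoc_of% e
    rw [← e']; simp only [← comp_whiskerRight]; simp
  have ex2 := reassoc_of% ex
  have ex' : r ◁ p ◁ z₁' ◁ γ₂ = eqToHom (by simp) ≫ Ψ.hom ▷ (x₂ ≫ g) ≫
      (r ≫ q ≫ z₂) ◁ γ₂ ≫ Ψ.inv ▷ (y₂ ≫ h) ≫ eqToHom (by simp) := by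
    rw [← ex2]
    simp [Bicategory.Strict.associator_eqToIso, comp_whiskerLeft]
  simp only [Iso.trans_hom, eqToIso.hom, Iso.symm_hom, whiskerLeftIso_hom,
    whiskerRightIso_hom, Category.assoc]
  simp only [Bicategory.Strict.associator_eqToIso, eqToIso.hom, eqToIso.inv, Bicategory.whiskerLeft_eqToHom, Bicategory.eqToHom_whiskerRight, comp_whiskerLeft, whisker_assoc, Bicategory.whiskerRight_comp, comp_whiskerRight, Bicategory.whiskerLeft_comp, eqToHom_trans, eqToHom_trans_assoc, eqToHom_refl, Category.assoc, Category.id_comp, Category.comp_id]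
  rw [h1]
  simp only [Bicategory.Strict.associator_eqToIso, eqToIso.hom, eqToIso.inv, Bicategory.whiskerLeft_eqToHom, Bicategory.eqToHom_whiskerRight, comp_whiskerLeft, whisker_assoc, Bicategory.whiskerRight_comp, comp_whiskerRight, Bicategory.whiskerLeft_comp, eqToHom_trans, eqToHom_trans_assoc, eqToHom_refl, Category.assoc, Category.id_comp, Category.comp_id]
  rw [ex']
  simp only [Bicategory.Strict.associator_eqToIso, eqToIso.hom, eqToIso.inv, Bicategory.whiskerLeft_eqToHom, Bicategory.eqToHom_whiskerRight, comp_whiskerLeft, whisker_assoc, Bicategory.whiskerRight_comp, comp_whiskerRight, Bicategory.whiskerLeft_comp, eqToHom_trans, eqToHom_trans_assoc, eqToHom_refl, Category.assoc, Category.id_comp, Category.comp_id]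
  rw [h2]
  simp only [Bicategory.Strict.associator_eqToIso, eqToIso.hom, eqToIso.inv, Bicategory.whiskerLeft_eqToHom, Bicategory.eqToHom_whiskerRight, comp_whiskerLeft, whisker_assoc, Bicategory.whiskerRight_comp, comp_whiskerRight, Bicategory.whiskerLeft_comp, eqToHom_trans, eqToHom_trans_assoc, eqToHom_refl, Category.assoc, Category.id_comp, Category.comp_id]
  simp only [← Bicategory.whiskerLeft_comp, ← Bicategory.whiskerLeft_comp_assoc,
    ← Bicategory.comp_whiskerRight, ← Bicategory.comp_whiskerRight_assoc,
    eqToHom_trans, eqToHom_trans_assoc, eqToHom_refl,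
    Iso.hom_inv_id, Iso.inv_hom_id, Bicategory.whiskerLeft_id, Bicategory.id_whiskerRight,
    Category.assoc, Category.comp_id, Category.id_comp]

end PronkAux

/-- Pronk's relation on valid quintuples (those with `w₁ ∘ v₁ ∈ W` and `α`
invertible) is reflexive, symmetric and transitive. -/
theorem statement16 {B : Type u} [Bicategory.{w, v} B] [Bicategory.Strict B]
    (W : ∀ ⦃X Y : B⦄, (X ⟶ Y) → Prop) (hBF : PronkBF W)
    {A Bb A₁ A₂ : B}
    (w₁ : A₁ ⟶ A) (f₁ : A₁ ⟶ Bb) (w₂ : A₂ ⟶ A) (f₂ : A₂ ⟶ Bb)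
    (hw₁ : W w₁) (hw₂ : W w₂) :
    (∀ Q : PronkSq w₁ f₁ w₂ f₂, W (Q.v₁ ≫ w₁) → IsIso Q.α →
        PronkRel W w₁ f₁ w₂ f₂ Q Q) ∧
    (∀ Q Q' : PronkSq w₁ f₁ w₂ f₂, W (Q.v₁ ≫ w₁) → IsIso Q.α →
        W (Q'.v₁ ≫ w₁) → IsIso Q'.α →
        PronkRel W w₁ f₁ w₂ f₂ Q Q' → PronkRel W w₁ f₁ w₂ f₂ Q' Q) ∧
    (∀ Q Q' Q'' : PronkSq w₁ f₁ w₂ f₂, W (Q.v₁ ≫ w₁) → IsIso Q.α →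
        W (Q'.v₁ ≫ w₁) → IsIso Q'.α → W (Q''.v₁ ≫ w₁) → IsIso Q''.α →
        PronkRel W w₁ f₁ w₂ f₂ Q Q' → PronkRel W w₁ f₁ w₂ f₂ Q' Q'' →
        PronkRel W w₁ f₁ w₂ f₂ Q Q'') := by
  constructor
  · -- reflexivity
    intro Q hQ _
    exact ⟨Q.obj, 𝟙 Q.obj, 𝟙 Q.obj, Iso.refl _, Iso.refl _, by simpa using hQ,
      paste_refl w₁ w₂ Q.α, paste_refl f₁ f₂ Q.β⟩
  constructor
  · -- symmetry
    rintro Q Q' _ _ _ _ ⟨C, z, z', σ₁, σ₂, hW, h₁, h₂⟩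
    exact ⟨C, z', z, σ₁.symm, σ₂.symm,
      hBF.bf5 _ _ hW ⟨whiskerRightIso σ₁ w₁⟩,
      paste_symm h₁, paste_symm h₂⟩
  · -- transitivity
    rintro Q Q' Q'' hQ _ hQ' _ hQ'' _
      ⟨C₁, z₁, z₁', σ₁, σ₂, hW1, h1a, h1b⟩ ⟨C₂, z₂, z₂', τ₁, τ₂, hW2, h2a, h2b⟩
    have hz₁' : W ((z₁' ≫ Q'.v₁) ≫ w₁) :=
      hBF.bf5 _ _ hW1 ⟨whiskerRightIso σ₁ w₁⟩
    obtain ⟨D, p, q, hp, ⟨φ₀⟩⟩ :=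
      hBF.bf3 ((z₂ ≫ Q'.v₁) ≫ w₁) ((z₁' ≫ Q'.v₁) ≫ w₁) hW2
    have φ : (p ≫ z₁') ≫ (Q'.v₁ ≫ w₁) ≅ (q ≫ z₂) ≫ (Q'.v₁ ≫ w₁) :=
      eqToIso (by simp) ≪≫ φ₀ ≪≫ eqToIso (by simp)
    obtain ⟨E, r, ψ, hr, hψ, -⟩ :=
      hBF.bf4b (Q'.v₁ ≫ w₁) (p ≫ z₁') (q ≫ z₂) φ.hom hQ' inferInstance
    haveI := hψ
    have Ψ : r ≫ (p ≫ z₁') ≅ r ≫ (q ≫ z₂) := asIso ψ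
    refine ⟨E, (r ≫ p) ≫ z₁, (r ≫ q) ≫ z₂',
      eqToIso (by simp) ≪≫ whiskerLeftIso (r ≫ q) τ₁ ≪≫ eqToIso (by simp)
        ≪≫ whiskerRightIso Ψ.symm Q'.v₁ ≪≫ eqToIso (by simp)
        ≪≫ whiskerLeftIso (r ≫ p) σ₁ ≪≫ eqToIso (by simp),
      eqToIso (by simp) ≪≫ whiskerLeftIso (r ≫ p) σ₂ ≪≫ eqToIso (by simp)
        ≪≫ whiskerRightIso Ψ Q'.v₂ ≪≫ eqToIso (by simp)
        ≪≫ whiskerLeftIso (r ≫ q) τ₂ ≪≫ eqToIso (by simp),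
      ?_, paste_trans p q r Ψ h1a h2a, paste_trans p q r Ψ h1b h2b⟩
    exact hBF.bf5 _ _
      (hBF.bf2 r _ hr (hBF.bf5 _ _ (hBF.bf2 p _ hp hz₁') ⟨φ₀.symm⟩))
      ⟨eqToIso (by simp) ≪≫ whiskerLeftIso (r ≫ p) (whiskerRightIso σ₁.symm w₁)
        ≪≫ eqToIso (by simp) ≪≫ whiskerLeftIso r φ₀ ≪≫ eqToIso (by simp)⟩
end
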